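/- arXiv:2408.13346 — 7 statements merged into one kernel-verified Lean document; each statement's English description precedes it below -/
import Mathlib

section
/- For every set A of positive integers and every integer n > 0, the sum of the second elementary symmetric polynomial over partitions of n with parts in A satisfies e_2p_A(n) = (1/2) ( n^2 * p(n|A) - Σ_{k=1}^{n} σ_{2,A}(k) * p(n-k|A) ). -/
open Finset

/-- The finset of partitions of `n` all of whose parts lie in `A`. -/
def partitionsIn (A : Set ℕ) [DecidablePred (· ∈ A)] (n : ℕ) : Finset (Nat.Partition n) :=
  Finset.univ.filter fun π => ∀ i ∈ π.parts, i ∈ A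

/-- `p(n|A)`, the number of partitions of `n` with parts in `A`. -/
def pIn (A : Set ℕ) [DecidablePred (· ∈ A)] (n : ℕ) : ℕ := (partitionsIn A n).card

/-- `e_j p_A(n)`, the sum of the `j`-th elementary symmetric polynomial evaluated at the
parts over all partitions of `n` with parts in `A`. -/
def ejpIn (A : Set ℕ) [DecidablePred (· ∈ A)] (j n : ℕ) : ℕ :=
  ∑ π ∈ partitionsIn A n, π.parts.esymm j

/-- `σ_{j,A}(n)`, the sum of `d^j` over the divisors `d` of `n` lying in `A`. -/
def sigmaIn (A : Set ℕ) [DecidablePred (· ∈ A)] (j n : ℕ) : ℕ :=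
  ∑ d ∈ n.divisors.filter (· ∈ A), d ^ j

/-!
Since `(∑ λᵢ)² = ∑ λᵢ² + 2 e₂(λ)`, it suffices to show that
`∑_λ ∑ᵢ λᵢ² = ∑_k σ_{2,A}(k) p(n-k|A)`.
Write `∑ᵢ λᵢ² = ∑_a m_a(λ) a²`, where `m_a(λ)` is the multiplicity of the part `a`, and count
`m_a(λ)` as the number of multiples `k = j a ≤ n` with `j ≤ m_a(λ)`. Removing `j` copies of `a` is
a bijection from the partitions of `n` with at least `j` parts equal to `a` onto the partitions of
`n - k`, and summing `a²` over the divisors `a ∈ A` of `k` yields `σ_{2,A}(k)`.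
-/

namespace Multiset

variable {R : Type*} [CommSemiring R]

theorem esymm_two_cons (a : R) (s : Multiset R) :
    (a ::ₘ s).esymm 2 = s.esymm 2 + a * s.sum := by
  simp only [esymm, powersetCard_cons, powersetCard_one, map_add, sum_add, map_map,
    Function.comp_def, prod_cons, prod_singleton]
  rw [sum_map_mul_left (f := fun x => x), map_id']

theorem two_mul_esymm_two_add_sum_map_sq (s : Multiset R) :
    2 * s.esymm 2 + (s.map (· ^ 2)).sum = s.sum ^ 2 := by
  induction s using Multiset.induction with
  | empty => simp [esymm, powersetCard_zero_right]
  | cons a s ih =>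
    rw [esymm_two_cons, map_cons, sum_cons, sum_cons, add_sq, ← ih]
    ring

theorem count_mul_le_sum (a : ℕ) (s : Multiset ℕ) : s.count a * a ≤ s.sum := by
  obtain ⟨t, hst⟩ := le_iff_exists_add.mp (le_count_iff_replicate_le.mp (le_refl (s.count a)))
  calc s.count a * a = (replicate (s.count a) a).sum := by simp
    _ ≤ (replicate (s.count a) a + t).sum := by rw [sum_add]; exact Nat.le_add_right _ _
    _ = s.sum := by rw [← hst]

end Multiset

namespace Nat.Partition

open Multiset

def addReplicate {m a : ℕ} (μ : m.Partition) (ha : 0 < a) (j : ℕ) : (m + j * a).Partition where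
  parts := μ.parts + replicate j a
  parts_pos hi := by
    rcases mem_add.mp hi with h | h
    · exact μ.parts_pos h
    · rwa [eq_of_mem_replicate h]
  parts_sum := by rw [sum_add, sum_replicate, smul_eq_mul, μ.parts_sum]

def removeReplicate {m j a : ℕ} (π : (m + j * a).Partition) (h : replicate j a ≤ π.parts) :
    m.Partition where
  parts := π.parts - replicate j a
  parts_pos hi := π.parts_pos (mem_of_le tsub_le_self hi)
  parts_sum := by
    have h := congrArg sum (tsub_add_cancel_of_le h)
    rw [sum_add, sum_replicate, smul_eq_mul, π.parts_sum] at h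
    omega

end Nat.Partition

section PartitionsIn

variable {A : Set ℕ} [DecidablePred (· ∈ A)]

theorem mem_partitionsIn {n : ℕ} {π : n.Partition} :
    π ∈ partitionsIn A n ↔ ∀ i ∈ π.parts, i ∈ A := by
  simp [partitionsIn]

theorem card_filter_le_count_partitionsIn {a : ℕ} (haA : a ∈ A) (ha : 0 < a) (m j : ℕ) :
    #{π ∈ partitionsIn A (m + j * a) | j ≤ π.parts.count a} = pIn A m := by
  refine card_bij'
    (fun π hπ => π.removeReplicate (Multiset.le_count_iff_replicate_le.mp (mem_filter.mp hπ).2))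
    (fun μ _ => μ.addReplicate ha j) ?_ ?_ ?_ ?_
  · intro π hπ
    simp only [mem_filter, mem_partitionsIn] at hπ ⊢
    exact fun i hi => hπ.1 i (Multiset.mem_of_le tsub_le_self hi)
  · intro μ hμ
    simp only [mem_filter, mem_partitionsIn, Nat.Partition.addReplicate, Multiset.mem_add,
      Multiset.count_add, Multiset.count_replicate_self] at hμ ⊢
    refine ⟨fun i hi => hi.elim (hμ i) fun h => Multiset.eq_of_mem_replicate h ▸ haA, ?_⟩
    omega
  · intro π hπ
    ext1
    exact tsub_add_cancel_of_le (Multiset.le_count_iff_replicate_le.mp (mem_filter.mp hπ).2)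
  · intro μ _
    ext1
    exact add_tsub_cancel_right _ _

theorem sum_count_partitionsIn {a : ℕ} (haA : a ∈ A) (ha : 0 < a) (n : ℕ) :
    ∑ π ∈ partitionsIn A n, π.parts.count a = ∑ k ∈ Icc 1 n with a ∣ k, pIn A (n - k) := by
  have hcount (c : ℕ) (hc : c * a ≤ n) : c = #{k ∈ (Icc 1 n).filter (a ∣ ·) | k ≤ c * a} := by
    have hfilter :
        {k ∈ (Icc 1 n).filter (a ∣ ·) | k ≤ c * a} = {k ∈ Ioc 0 (c * a) | a ∣ k} := by
      ext k
      simp only [mem_filter, mem_Icc, mem_Ioc]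
      constructor
      · rintro ⟨⟨⟨hk1, -⟩, hak⟩, hkc⟩
        exact ⟨⟨hk1, hkc⟩, hak⟩
      · rintro ⟨⟨hk0, hkc⟩, hak⟩
        exact ⟨⟨⟨hk0, hkc.trans hc⟩, hak⟩, hkc⟩
    rw [hfilter, Nat.Ioc_filter_dvd_card_eq_div, Nat.mul_div_cancel _ ha]
  calc ∑ π ∈ partitionsIn A n, π.parts.count a
      = ∑ π ∈ partitionsIn A n, ∑ k ∈ Icc 1 n with a ∣ k,
          if k ≤ π.parts.count a * a then 1 else 0 := by
        refine sum_congr rfl fun π _ => ?_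
        rw [sum_boole, Nat.cast_id,
          ← hcount _ ((Multiset.count_mul_le_sum a _).trans_eq π.parts_sum)]
    _ = ∑ k ∈ Icc 1 n with a ∣ k, #{π ∈ partitionsIn A n | k ≤ π.parts.count a * a} := by
        rw [sum_comm]
        simp only [sum_boole, Nat.cast_id]
    _ = ∑ k ∈ Icc 1 n with a ∣ k, pIn A (n - k) := by
        refine sum_congr rfl fun k hk => ?_
        obtain ⟨⟨-, hkn⟩, j, rfl⟩ := (mem_filter.mp hk).imp_left mem_Icc.mp
        rw [mul_comm] at hkn ⊢
        obtain ⟨m, rfl⟩ := Nat.exists_eq_add_of_le' hkn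
        simp only [Nat.mul_le_mul_right_iff ha]
        rw [card_filter_le_count_partitionsIn haA ha, Nat.add_sub_cancel]

theorem sum_map_sq_eq_sum_count {n : ℕ} {π : n.Partition} (hπ : π ∈ partitionsIn A n) :
    (π.parts.map (· ^ 2)).sum = ∑ a ∈ Icc 1 n with a ∈ A, π.parts.count a * a ^ 2 := by
  rw [sum_multiset_map_count]
  refine sum_subset (fun a ha => ?_) (fun a _ ha => ?_)
  · rw [Multiset.mem_toFinset] at ha
    exact mem_filter.mpr
      ⟨mem_Icc.mpr ⟨π.parts_pos ha, π.le_of_mem_parts ha⟩, mem_partitionsIn.mp hπ a ha⟩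
  · rw [Multiset.mem_toFinset] at ha
    rw [Multiset.count_eq_zero_of_notMem ha, zero_smul]

theorem sum_sum_map_sq_partitionsIn (n : ℕ) :
    ∑ π ∈ partitionsIn A n, (π.parts.map (· ^ 2)).sum =
      ∑ k ∈ Icc 1 n, sigmaIn A 2 k * pIn A (n - k) := by
  calc ∑ π ∈ partitionsIn A n, (π.parts.map (· ^ 2)).sum
      = ∑ a ∈ Icc 1 n with a ∈ A, (∑ π ∈ partitionsIn A n, π.parts.count a) * a ^ 2 := by
        rw [sum_congr rfl fun π hπ => sum_map_sq_eq_sum_count hπ, sum_comm]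
        simp only [sum_mul]
    _ = ∑ a ∈ Icc 1 n with a ∈ A, ∑ k ∈ Icc 1 n with a ∣ k, a ^ 2 * pIn A (n - k) := by
        refine sum_congr rfl fun a ha => ?_
        obtain ⟨⟨ha1, -⟩, haA⟩ := (mem_filter.mp ha).imp_left mem_Icc.mp
        rw [sum_count_partitionsIn haA ha1, sum_mul]
        exact sum_congr rfl fun _ _ => mul_comm _ _
    _ = ∑ k ∈ Icc 1 n, ∑ a ∈ k.divisors with a ∈ A, a ^ 2 * pIn A (n - k) := by
        refine sum_comm' fun a k => ?_
        simp only [mem_filter, mem_Icc, Nat.mem_divisors]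
        constructor
        · rintro ⟨⟨-, haA⟩, hk, hak⟩
          exact ⟨⟨⟨hak, by omega⟩, haA⟩, hk⟩
        · rintro ⟨⟨⟨hak, hk0⟩, haA⟩, hk⟩
          have := Nat.le_of_dvd (by omega) hak
          exact ⟨⟨⟨Nat.pos_of_dvd_of_pos hak (by omega), by omega⟩, haA⟩, hk, hak⟩
    _ = ∑ k ∈ Icc 1 n, sigmaIn A 2 k * pIn A (n - k) := by
        simp only [sigmaIn, sum_mul]

theorem two_mul_ejpIn_two_add_sum_sigmaIn_mul_pIn (n : ℕ) :
    2 * ejpIn A 2 n + ∑ k ∈ Icc 1 n, sigmaIn A 2 k * pIn A (n - k) = n ^ 2 * pIn A n := by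
  rw [← sum_sum_map_sq_partitionsIn, ejpIn, mul_sum, ← sum_add_distrib,
    sum_congr rfl fun π _ => by rw [Multiset.two_mul_esymm_two_add_sum_map_sq, π.parts_sum],
    sum_const, smul_eq_mul, pIn, mul_comm]

end PartitionsIn

theorem e2pA_formula_general (A : Set ℕ) [DecidablePred (· ∈ A)] (n : ℕ) :
    (ejpIn A 2 n : ℚ) =
      (1 / 2) * ((n : ℚ) ^ 2 * (pIn A n : ℚ) -
        ∑ k ∈ Finset.Icc 1 n, (sigmaIn A 2 k : ℚ) * (pIn A (n - k) : ℚ)) := by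
  have h := congrArg (Nat.cast : ℕ → ℚ) (two_mul_ejpIn_two_add_sum_sigmaIn_mul_pIn (A := A) n)
  push_cast at h
  linarith

theorem e2pA_formula (A : Set ℕ) [DecidablePred (· ∈ A)] (hA : ∀ a ∈ A, 0 < a)
    (n : ℕ) (hn : 0 < n) :
    (ejpIn A 2 n : ℚ) =
      (1 / 2) * ((n : ℚ) ^ 2 * (pIn A n : ℚ) -
        ∑ k ∈ Finset.Icc 1 n, (sigmaIn A 2 k : ℚ) * (pIn A (n - k) : ℚ)) :=
  e2pA_formula_general A n
end

section
/- For every set A of positive integers, every integer j ≥ 1, and every integer n ≥ 1, the sum of the j-th power sums of the parts over all partitions of n with parts in A equals Σ_{k=1}^{n} σ_{j,A}(k) * p(n-k|A); that is, Σ_{λ ∈ P(n|A)} Σ_{i=1}^{ℓ(λ)} λ_i^j = Σ_{k=1}^{n} σ_{j,A}(k) * p(n-k|A). -/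
open Finset

lemma multiset_sum_mono {s t : Multiset ℕ} (h : s ≤ t) : s.sum ≤ t.sum := by
  obtain ⟨u, rfl⟩ := Multiset.le_iff_exists_add.mp h
  simp

/-- Remove `m` copies of `d` from a partition. -/
def subPartition {n : ℕ} (π : Nat.Partition n) (d m : ℕ)
    (hle : Multiset.replicate m d ≤ π.parts) : Nat.Partition (n - d * m) where
  parts := π.parts - Multiset.replicate m d
  parts_pos := fun hi => π.parts_pos (Multiset.mem_of_le tsub_le_self hi)
  parts_sum := by
    have h := congrArg Multiset.sum (tsub_add_cancel_of_le hle)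
    rw [Multiset.sum_add, Multiset.sum_replicate, smul_eq_mul, π.parts_sum] at h
    have : m * d = d * m := mul_comm m d
    omega

/-- Add `m` copies of `d` to a partition. -/
def addPartition {k n : ℕ} (π : Nat.Partition k) (d m : ℕ) (hd : 1 ≤ d)
    (h : k + m * d = n) : Nat.Partition n where
  parts := π.parts + Multiset.replicate m d
  parts_pos := fun hi => by
    rcases Multiset.mem_add.mp hi with h' | h'
    · exact π.parts_pos h'
    · rw [Multiset.eq_of_mem_replicate h']; exact hd
  parts_sum := by
    rw [Multiset.sum_add, π.parts_sum, Multiset.sum_replicate, smul_eq_mul, h]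

lemma card_filter_count (A : Set ℕ) [DecidablePred (· ∈ A)] {d m n : ℕ}
    (hd : d ∈ A) (hd1 : 1 ≤ d) (hdm : d * m ≤ n) :
    ((partitionsIn A n).filter (fun π => m ≤ π.parts.count d)).card = pIn A (n - d * m) := by
  rw [pIn]
  have key : ∀ π : Nat.Partition n, π ∈ (partitionsIn A n).filter
      (fun π => m ≤ π.parts.count d) → Multiset.replicate m d ≤ π.parts := by
    intro π hπ
    exact Multiset.le_count_iff_replicate_le.mp (Finset.mem_filter.mp hπ).2
  refine Finset.card_bij'
    (fun π hπ => subPartition π d m (key π hπ))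
    (fun π _ => addPartition π d m hd1 (by rw [mul_comm m d]; omega)) ?_ ?_ ?_ ?_
  · intro π hπ
    have hπA := (Finset.mem_filter.mp (Finset.mem_filter.mp hπ).1).2
    simp only [partitionsIn, Finset.mem_filter, Finset.mem_univ, true_and]
    intro i hi
    exact hπA i (Multiset.mem_of_le tsub_le_self hi)
  · intro π hπ
    simp only [partitionsIn, Finset.mem_filter, Finset.mem_univ, true_and] at hπ ⊢
    refine ⟨?_, ?_⟩
    · intro i hi
      rcases Multiset.mem_add.mp hi with h' | h'
      · exact hπ i h'
      · rw [Multiset.eq_of_mem_replicate h']; exact hd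
    · show m ≤ (π.parts + Multiset.replicate m d).count d
      rw [Multiset.count_add, Multiset.count_replicate_self]
      omega
  · intro π hπ
    apply Nat.Partition.ext
    exact tsub_add_cancel_of_le (key π hπ)
  · intro π _
    apply Nat.Partition.ext
    show π.parts + Multiset.replicate m d - Multiset.replicate m d = π.parts
    exact add_tsub_cancel_right _ _

lemma sum_count_eq (A : Set ℕ) [DecidablePred (· ∈ A)] (n d : ℕ) (hd1 : 1 ≤ d) :
    ∑ π ∈ partitionsIn A n, π.parts.count d
      = ∑ m ∈ Finset.Icc 1 n, (if d ∈ A ∧ d * m ≤ n then pIn A (n - d * m) else 0) := by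
  have hcd : ∀ π ∈ partitionsIn A n, π.parts.count d * d ≤ n := by
    intro π _
    have hle : Multiset.replicate (π.parts.count d) d ≤ π.parts :=
      Multiset.le_count_iff_replicate_le.mp le_rfl
    have h := multiset_sum_mono hle
    rwa [Multiset.sum_replicate, smul_eq_mul, π.parts_sum] at h
  calc
    ∑ π ∈ partitionsIn A n, π.parts.count d
        = ∑ π ∈ partitionsIn A n, ∑ m ∈ Finset.Icc 1 n,
            (if m ≤ π.parts.count d then 1 else 0) := by
      refine Finset.sum_congr rfl fun π hπ => ?_
      have hcn : π.parts.count d ≤ n := by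
        have := hcd π hπ; nlinarith
      rw [← Finset.card_filter]
      rw [show (Finset.Icc 1 n).filter (· ≤ π.parts.count d)
            = Finset.Icc 1 (π.parts.count d) by ext x; simp; omega]
      simp
    _ = ∑ m ∈ Finset.Icc 1 n, ∑ π ∈ partitionsIn A n,
          (if m ≤ π.parts.count d then 1 else 0) := Finset.sum_comm
    _ = ∑ m ∈ Finset.Icc 1 n, (if d ∈ A ∧ d * m ≤ n then pIn A (n - d * m) else 0) := by
      refine Finset.sum_congr rfl fun m hm => ?_
      rw [← Finset.card_filter]
      have hm1 : 1 ≤ m := (Finset.mem_Icc.mp hm).1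
      split_ifs with h
      · exact card_filter_count A h.1 hd1 h.2
      · rw [Finset.card_eq_zero, Finset.filter_eq_empty_iff]
        intro π hπ hmc
        have hdmem : d ∈ π.parts := Multiset.count_pos.mp (by omega)
        have hdA : d ∈ A := (Finset.mem_filter.mp hπ).2 d hdmem
        have h2 := hcd π hπ
        have : d * m ≤ n := le_trans (by nlinarith) h2
        exact h ⟨hdA, this⟩

/-- The sum over all partitions of `n` with parts in `A` of the `j`-th power sum of the
parts equals `Σ_{k=1}^{n} σ_{j,A}(k) p(n-k|A)`. -/
theorem powerSum_partition_formula (A : Set ℕ) [DecidablePred (· ∈ A)]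
    (hA : ∀ a ∈ A, 0 < a) (j : ℕ) (hj : 1 ≤ j) (n : ℕ) (hn : 1 ≤ n) :
    ∑ π ∈ partitionsIn A n, (π.parts.map (· ^ j)).sum =
      ∑ k ∈ Finset.Icc 1 n, sigmaIn A j k * pIn A (n - k) := by
  have lhs_eq : ∑ π ∈ partitionsIn A n, (π.parts.map (· ^ j)).sum
      = ∑ d ∈ Finset.Icc 1 n, ∑ m ∈ Finset.Icc 1 n,
          (if d ∈ A ∧ d * m ≤ n then pIn A (n - d * m) * d ^ j else 0) := by
    have step1 : ∀ π ∈ partitionsIn A n,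
        (π.parts.map (· ^ j)).sum = ∑ d ∈ Finset.Icc 1 n, π.parts.count d * d ^ j := by
      intro π _
      rw [Finset.sum_multiset_map_count]
      have hsub : π.parts.toFinset ⊆ Finset.Icc 1 n := by
        intro x hx
        rw [Multiset.mem_toFinset] at hx
        have h1 := π.parts_pos hx
        have h2 : x ≤ π.parts.sum := Multiset.single_le_sum (fun y _ => Nat.zero_le y) _ hx
        rw [π.parts_sum] at h2
        exact Finset.mem_Icc.mpr ⟨h1, h2⟩
      rw [Finset.sum_subset hsub (fun x _ hx => by
        rw [Multiset.count_eq_zero_of_notMem (by simpa using hx), zero_smul])]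
      simp [smul_eq_mul]
    calc ∑ π ∈ partitionsIn A n, (π.parts.map (· ^ j)).sum
        = ∑ π ∈ partitionsIn A n, ∑ d ∈ Finset.Icc 1 n, π.parts.count d * d ^ j :=
          Finset.sum_congr rfl step1
      _ = ∑ d ∈ Finset.Icc 1 n, ∑ π ∈ partitionsIn A n, π.parts.count d * d ^ j :=
          Finset.sum_comm
      _ = ∑ d ∈ Finset.Icc 1 n, (∑ π ∈ partitionsIn A n, π.parts.count d) * d ^ j := by
          simp [Finset.sum_mul]
      _ = _ := by
          refine Finset.sum_congr rfl fun d hd => ?_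
          rw [sum_count_eq A n d (Finset.mem_Icc.mp hd).1, Finset.sum_mul]
          refine Finset.sum_congr rfl fun m _ => ?_
          rw [ite_mul, zero_mul]
  rw [lhs_eq]
  have rhs_eq : ∑ k ∈ Finset.Icc 1 n, sigmaIn A j k * pIn A (n - k)
      = ∑ e ∈ Finset.Icc 1 n, ∑ k ∈ Finset.Icc 1 n,
          (if e ∣ k ∧ e ∈ A then pIn A (n - k) * e ^ j else 0) := by
    rw [← Finset.sum_comm]
    refine Finset.sum_congr rfl fun k hk => ?_
    obtain ⟨hk1, hk2⟩ := Finset.mem_Icc.mp hk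
    rw [sigmaIn, Finset.sum_mul]
    rw [show k.divisors.filter (· ∈ A)
          = (Finset.Icc 1 n).filter (fun e => e ∣ k ∧ e ∈ A) from ?_]
    · rw [Finset.sum_filter]
      refine Finset.sum_congr rfl fun e _ => ?_
      split_ifs <;> ring
    · ext e
      simp only [Nat.mem_divisors, Finset.mem_filter, Finset.mem_Icc]
      constructor
      · rintro ⟨⟨he, -⟩, heA⟩
        exact ⟨⟨Nat.pos_of_dvd_of_pos he hk1, le_trans (Nat.le_of_dvd hk1 he) hk2⟩, he, heA⟩
      · rintro ⟨-, he, heA⟩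
        exact ⟨⟨he, by omega⟩, heA⟩
  rw [rhs_eq]
  refine Finset.sum_congr rfl fun e he => ?_
  obtain ⟨he1, he2⟩ := Finset.mem_Icc.mp he
  by_cases heA : e ∈ A
  · simp only [heA, and_true, true_and]
    rw [← Finset.sum_filter, ← Finset.sum_filter]
    refine Finset.sum_nbij' (fun m => e * m) (fun k => k / e) ?_ ?_ ?_ ?_ ?_
    · intro m hm
      simp only [Finset.mem_filter, Finset.mem_Icc] at hm ⊢
      exact ⟨⟨Nat.mul_pos (by omega) (by omega), hm.2⟩, dvd_mul_right e m⟩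
    · intro k hk
      simp only [Finset.mem_filter, Finset.mem_Icc] at hk ⊢
      obtain ⟨⟨hk1, hk2⟩, hke⟩ := hk
      have hek : e ≤ k := Nat.le_of_dvd hk1 hke
      refine ⟨⟨?_, le_trans (Nat.div_le_self k e) hk2⟩, ?_⟩
      · rw [Nat.one_le_div_iff (by omega)]; exact hek
      · rw [Nat.mul_div_cancel' hke]; exact hk2
    · intro m hm
      exact Nat.mul_div_cancel_left m (by omega)
    · intro k hk
      simp only [Finset.mem_filter] at hk
      exact Nat.mul_div_cancel' hk.2
    · intro m _; rfl
  · simp [heA]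
end

section
/- For every integer n > 0, e_2p(n) = (1/2) ( n^2 * p(n) - Σ_{k=1}^{n} σ_2(k) * p(n-k) ). -/
open Finset

/-- `e_j p(n)`, the sum of the `j`-th elementary symmetric polynomial evaluated at the
parts over all partitions of `n`. -/
def ejp (j n : ℕ) : ℕ := ∑ π : Nat.Partition n, π.parts.esymm j

/-- `σ_j(n)`, the sum of the `j`-th powers of the divisors of `n`. -/
def sigmaPow (j n : ℕ) : ℕ := ∑ d ∈ n.divisors, d ^ j

/-!
Summing the identity `(Σ λᵢ)² = 2 e₂(λ) + Σ λᵢ²` over all partitions `λ` of `n` gives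
`n² p(n) = 2 e₂p(n) + Σ_λ Σᵢ λᵢ²`. In the last sum a part `d` contributes `d²` times its
multiplicity, and the partitions of `n` with at least `j` copies of `d` correspond to the
partitions of `n - j d` (remove those copies), so `Σ_λ mult_d(λ) = Σ_{j ≥ 1} p(n - j d)`.
Collecting the terms with `j d = k` gives `Σ_k σ₂(k) p(n - k)`.
-/

namespace Multiset

variable {R : Type*} [CommSemiring R]

theorem esymm_cons_succ (a : R) (s : Multiset R) (k : ℕ) :
    (a ::ₘ s).esymm (k + 1) = a * s.esymm k + s.esymm (k + 1) := by
  simp [esymm, powersetCard_cons, map_map, sum_map_mul_left, add_comm]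

theorem esymm_one (s : Multiset R) : s.esymm 1 = s.sum := by
  simp [esymm, powersetCard_one, map_map]

theorem sum_sq_eq_two_mul_esymm_two_add (s : Multiset R) :
    s.sum ^ 2 = 2 * s.esymm 2 + (s.map (· ^ 2)).sum := by
  induction s using Multiset.induction with
  | empty => simp [esymm, powersetCard_zero_right]
  | cons a s ih =>
    rw [esymm_cons_succ, esymm_one, sum_cons, map_cons, sum_cons, add_sq, ih]
    ring

end Multiset

theorem Nat.sum_Icc_div_mul {M : Type*} [AddCommMonoid M] {d : ℕ} (hd : 0 < d) (n : ℕ)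
    (h : ℕ → M) : ∑ j ∈ Icc 1 (n / d), h (j * d) = ∑ k ∈ Icc 1 n with d ∣ k, h k := by
  refine sum_nbij' (· * d) (· / d) ?_ ?_ ?_ ?_ fun _ _ => rfl
  · intro j hj
    simp only [mem_Icc, Nat.le_div_iff_mul_le hd] at hj
    simp only [mem_filter, mem_Icc, dvd_mul_left, and_true]
    exact ⟨Nat.mul_pos hj.1 hd, hj.2⟩
  · intro k hk
    simp only [mem_filter, mem_Icc] at hk
    obtain ⟨⟨hk1, hkn⟩, c, rfl⟩ := hk
    rw [mem_Icc, Nat.mul_div_cancel_left _ hd, Nat.le_div_iff_mul_le hd, mul_comm]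
    exact ⟨Nat.pos_of_ne_zero (by rintro rfl; simp at hk1), hkn⟩
  · intro j _
    simp [Nat.mul_div_cancel _ hd]
  · intro k hk
    exact Nat.div_mul_cancel (mem_filter.mp hk).2

namespace Nat.Partition

variable {n : ℕ}

theorem count_parts_mul_le (π : n.Partition) (d : ℕ) : π.parts.count d * d ≤ n := by
  obtain ⟨t, ht⟩ := le_iff_exists_add.mp
    ((Multiset.le_count_iff_replicate_le (a := d) (s := π.parts)).mp le_rfl)
  have := congrArg Multiset.sum ht
  rw [π.parts_sum, Multiset.sum_add, Multiset.sum_replicate, smul_eq_mul] at this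
  omega

def partitionWithReplicateEquiv {d j : ℕ} (hd : 0 < d) (h : j * d ≤ n) :
    {π : n.Partition // j ≤ π.parts.count d} ≃ (n - j * d).Partition where
  toFun π :=
    { parts := π.1.parts - .replicate j d
      parts_pos := fun hi => π.1.parts_pos (Multiset.mem_of_le tsub_le_self hi)
      parts_sum := by
        have := congrArg Multiset.sum
          (tsub_add_cancel_of_le (Multiset.le_count_iff_replicate_le.mp π.2))
        rw [π.1.parts_sum, Multiset.sum_add, Multiset.sum_replicate, smul_eq_mul] at this
        omega }
  invFun μ :=
    ⟨{ parts := μ.parts + .replicate j d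
       parts_pos := fun hi => (Multiset.mem_add.mp hi).elim μ.parts_pos
         fun h => (Multiset.eq_of_mem_replicate h) ▸ hd
       parts_sum := by
         rw [Multiset.sum_add, μ.parts_sum, Multiset.sum_replicate, smul_eq_mul]
         omega },
      by simp⟩
  left_inv π := Subtype.ext <| Nat.Partition.ext <|
    tsub_add_cancel_of_le (Multiset.le_count_iff_replicate_le.mp π.2)
  right_inv μ := Nat.Partition.ext <| add_tsub_cancel_right _ _

theorem card_filter_le_count_parts {d j : ℕ} (hd : 0 < d) (h : j * d ≤ n) :
    #{π : n.Partition | j ≤ π.parts.count d} = Fintype.card (n - j * d).Partition := by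
  rw [← Fintype.card_subtype, Fintype.card_congr (partitionWithReplicateEquiv hd h)]

theorem sum_count_parts {d : ℕ} (hd : 0 < d) :
    ∑ π : n.Partition, π.parts.count d =
      ∑ k ∈ Icc 1 n with d ∣ k, Fintype.card (n - k).Partition := by
  have hcount (π : n.Partition) :
      π.parts.count d = #{j ∈ Icc 1 (n / d) | j ≤ π.parts.count d} := by
    have : π.parts.count d ≤ n / d := (Nat.le_div_iff_mul_le hd).mpr (π.count_parts_mul_le d)
    rw [show {j ∈ Icc 1 (n / d) | j ≤ π.parts.count d} = Icc 1 (π.parts.count d) by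
      ext; simp only [mem_filter, mem_Icc]; omega]
    simp
  calc ∑ π : n.Partition, π.parts.count d
      = ∑ π : n.Partition, #{j ∈ Icc 1 (n / d) | j ≤ π.parts.count d} :=
        sum_congr rfl fun π _ => hcount π
    _ = ∑ j ∈ Icc 1 (n / d), #{π : n.Partition | j ≤ π.parts.count d} := by
        simp only [card_filter]
        exact sum_comm
    _ = ∑ j ∈ Icc 1 (n / d), Fintype.card (n - j * d).Partition :=
        sum_congr rfl fun j hj => card_filter_le_count_parts hd
          ((Nat.le_div_iff_mul_le hd).mp (mem_Icc.mp hj).2)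
    _ = _ := Nat.sum_Icc_div_mul hd n fun k => Fintype.card (n - k).Partition

theorem sum_map_parts_eq_sum_count {M : Type*} [AddCommMonoid M] (π : n.Partition)
    (f : ℕ → M) : (π.parts.map f).sum = ∑ d ∈ Icc 1 n, π.parts.count d • f d := by
  rw [sum_multiset_map_count]
  refine sum_subset (fun d hd => ?_) fun d _ hd => ?_
  · have hd := Multiset.mem_toFinset.mp hd
    exact mem_Icc.mpr ⟨π.parts_pos hd, π.le_of_mem_parts hd⟩
  · rw [Multiset.count_eq_zero_of_notMem (mt Multiset.mem_toFinset.mpr hd), zero_smul]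

theorem sum_sum_map_parts {M : Type*} [AddCommMonoid M] (f : ℕ → M) (n : ℕ) :
    ∑ π : n.Partition, (π.parts.map f).sum =
      ∑ k ∈ Icc 1 n, Fintype.card (n - k).Partition • ∑ d ∈ k.divisors, f d := by
  calc ∑ π : n.Partition, (π.parts.map f).sum
      = ∑ d ∈ Icc 1 n, (∑ π : n.Partition, π.parts.count d) • f d := by
        simp_rw [sum_map_parts_eq_sum_count, sum_smul]
        exact sum_comm
    _ = ∑ d ∈ Icc 1 n, ∑ k ∈ Icc 1 n with d ∣ k, Fintype.card (n - k).Partition • f d :=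
        sum_congr rfl fun d hd => by rw [sum_count_parts (mem_Icc.mp hd).1, sum_smul]
    _ = ∑ k ∈ Icc 1 n, ∑ d ∈ k.divisors, Fintype.card (n - k).Partition • f d := by
        refine sum_comm' fun d k => ?_
        simp only [mem_Icc, mem_filter, Nat.mem_divisors]
        exact ⟨fun ⟨_, hk, hdk⟩ => ⟨⟨hdk, by omega⟩, hk⟩, fun ⟨⟨hdk, _⟩, hk⟩ =>
          ⟨⟨Nat.pos_of_dvd_of_pos hdk hk.1, (Nat.le_of_dvd hk.1 hdk).trans hk.2⟩, hk, hdk⟩⟩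
    _ = _ := by simp_rw [smul_sum]

end Nat.Partition

theorem e2p_formula_general (n : ℕ) :
    (ejp 2 n : ℚ) =
      (1 / 2) * ((n : ℚ) ^ 2 * (Fintype.card (Nat.Partition n) : ℚ) -
        ∑ k ∈ Finset.Icc 1 n,
          (sigmaPow 2 k : ℚ) * (Fintype.card (Nat.Partition (n - k)) : ℚ)) := by
  have key : n ^ 2 * Fintype.card n.Partition =
      2 * ejp 2 n + ∑ k ∈ Icc 1 n, sigmaPow 2 k * Fintype.card (n - k).Partition := by
    calc n ^ 2 * Fintype.card n.Partition = ∑ π : n.Partition, π.parts.sum ^ 2 := by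
          simp [Nat.Partition.parts_sum, mul_comm]
      _ = ∑ π : n.Partition, (2 * π.parts.esymm 2 + (π.parts.map (· ^ 2)).sum) :=
          sum_congr rfl fun π _ => π.parts.sum_sq_eq_two_mul_esymm_two_add
      _ = 2 * ejp 2 n + ∑ π : n.Partition, (π.parts.map (· ^ 2)).sum := by
          rw [sum_add_distrib, ejp, mul_sum]
      _ = _ := by
          rw [Nat.Partition.sum_sum_map_parts]
          simp [sigmaPow, mul_comm]
  have hq := congrArg (Nat.cast (R := ℚ)) key
  push_cast at hq
  linarith

theorem e2p_formula (n : ℕ) (hn : 0 < n) :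
    (ejp 2 n : ℚ) =
      (1 / 2) * ((n : ℚ) ^ 2 * (Fintype.card (Nat.Partition n) : ℚ) -
        ∑ k ∈ Finset.Icc 1 n,
          (sigmaPow 2 k : ℚ) * (Fintype.card (Nat.Partition (n - k)) : ℚ)) :=
  e2p_formula_general n
end

section
/- For every integer n > 0, e_2Q(n) = (1/2) ( n^2 * Q(n) - Σ_{k=1}^{n} σ_{2,odd}(k) * Q(n-k) ). -/
open Finset

/-- The finset of partitions of `n` into odd parts. -/
def oddPartitions (n : ℕ) : Finset (Nat.Partition n) :=
  Finset.univ.filter fun π => ∀ i ∈ π.parts, Odd i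

/-- `Q(n)`, the number of partitions of `n` into odd parts. -/
def Qodd (n : ℕ) : ℕ := (oddPartitions n).card

/-- `e_j Q(n)`, the sum of the `j`-th elementary symmetric polynomial evaluated at the
parts over all partitions of `n` into odd parts. -/
def ejQ (j n : ℕ) : ℕ := ∑ π ∈ oddPartitions n, π.parts.esymm j

/-- `σ_{j,odd}(n)`, the sum of `d^j` over the odd divisors `d` of `n`. -/
def sigmaOdd (j n : ℕ) : ℕ := ∑ d ∈ n.divisors.filter Odd, d ^ j

/-! Every partition `λ` of `n` has `n² = (Σ λᵢ)² = Σ λᵢ² + 2 e₂(λ)`, so summing over odd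
partitions gives `n² Q(n) = Σ_λ Σᵢ λᵢ² + 2 e₂Q(n)`. The power sum is counted through
multiplicities: removing `m` copies of an odd `d` shows that `Q(n - dm)` odd partitions of `n`
contain `d` at least `m` times, hence `Σ_λ Σᵢ λᵢ² = Σ_{d odd, m ≥ 1} d² Q(n - dm)`, and grouping the
terms by `k = dm` turns this into `Σ_k σ_{2,odd}(k) Q(n - k)`. -/

theorem Multiset.esymm_two_cons_s5 {R : Type*} [CommSemiring R] (a : R) (s : Multiset R) :
    (a ::ₘ s).esymm 2 = s.esymm 2 + a * s.sum := by
  simp only [Multiset.esymm, Multiset.powersetCard_cons, Multiset.powersetCard_one,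
    Multiset.map_add, Multiset.map_map, Multiset.sum_add]
  congr 1
  simpa [Function.comp_def] using Multiset.sum_map_mul_left (s := s) (a := a) (f := id)

theorem Multiset.sq_sum_eq_sum_map_sq_add_two_mul_esymm_two {R : Type*} [CommSemiring R]
    (s : Multiset R) : s.sum ^ 2 = (s.map (· ^ 2)).sum + 2 * s.esymm 2 := by
  induction s using Multiset.induction with
  | empty => simp [Multiset.esymm, Multiset.powersetCard_zero_right]
  | cons a s ih =>
    rw [Multiset.sum_cons, Multiset.map_cons, Multiset.sum_cons, esymm_two_cons_s5, add_sq, ih]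
    ring

theorem Nat.sum_Icc_sum_divisors {M : Type*} [AddCommMonoid M] (N : ℕ) (g : ℕ → ℕ → M) :
    ∑ k ∈ Icc 1 N, ∑ d ∈ k.divisors, g d k = ∑ d ∈ Icc 1 N, ∑ m ∈ Icc 1 (N / d), g d (d * m) := by
  rw [sum_comm' (t' := Icc 1 N) (s' := fun d => (Icc 1 (N / d)).image (d * ·))]
  · refine sum_congr rfl fun d hd => sum_image fun m _ m' _ h => ?_
    exact Nat.eq_of_mul_eq_mul_left (mem_Icc.mp hd).1 h
  · intro k d
    simp only [mem_Icc, mem_divisors, mem_image]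
    constructor
    · rintro ⟨⟨hk1, hkN⟩, ⟨m, rfl⟩, -⟩
      have hd : 0 < d := Nat.pos_of_mul_pos_right hk1
      refine ⟨⟨m, ⟨Nat.pos_of_mul_pos_left hk1, (Nat.le_div_iff_mul_le hd).mpr ?_⟩, rfl⟩, hd, ?_⟩
      · rwa [mul_comm]
      · exact (Nat.le_mul_of_pos_right d (Nat.pos_of_mul_pos_left hk1)).trans hkN
    · rintro ⟨⟨m, ⟨hm1, hmN⟩, rfl⟩, hd1, -⟩
      have := (Nat.le_div_iff_mul_le hd1).mp hmN
      refine ⟨⟨Nat.mul_pos hd1 hm1, by rwa [mul_comm]⟩, dvd_mul_right d m, by positivity⟩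

namespace Nat.Partition

variable {p : ℕ → Prop} [DecidablePred p]

theorem mem_restricted {n : ℕ} {π : n.Partition} : π ∈ restricted n p ↔ ∀ i ∈ π.parts, p i := by
  simp [restricted]

theorem card_restricted_filter_le_count {n d m : ℕ} (hd : 0 < d) (hpd : p d) (hdm : d * m ≤ n) :
    #{π ∈ restricted n p | m ≤ π.parts.count d} = #(restricted (n - d * m) p) := by
  have sum_replicate : (Multiset.replicate m d).sum = d * m := by simp [mul_comm]
  refine card_bij'
    (fun π hπ => ⟨π.parts - .replicate m d,
      fun hi => π.parts_pos (Multiset.mem_of_le tsub_le_self hi), by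
        have hle := Multiset.le_count_iff_replicate_le.mp (mem_filter.mp hπ).2
        have := congrArg Multiset.sum (tsub_add_cancel_of_le hle)
        rw [Multiset.sum_add, π.parts_sum, sum_replicate] at this
        omega⟩)
    (fun μ _ => ⟨μ.parts + .replicate m d,
      fun hi => (Multiset.mem_add.mp hi).elim μ.parts_pos
        fun h => (Multiset.eq_of_mem_replicate h).symm ▸ hd, by
        rw [Multiset.sum_add, μ.parts_sum, sum_replicate]; omega⟩)
    ?_ ?_ ?_ ?_
  · intro π hπ
    simp only [mem_filter, mem_restricted] at hπ ⊢
    exact fun i hi => hπ.1 i (Multiset.mem_of_le tsub_le_self hi)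
  · intro μ hμ
    simp only [mem_filter, mem_restricted, Multiset.count_add, Multiset.count_replicate_self,
      Multiset.mem_add] at hμ ⊢
    exact ⟨fun i hi => hi.elim (hμ i) fun h => (Multiset.eq_of_mem_replicate h).symm ▸ hpd,
      by omega⟩
  · intro π hπ
    ext1
    exact tsub_add_cancel_of_le (Multiset.le_count_iff_replicate_le.mp (mem_filter.mp hπ).2)
  · intro μ _
    ext1
    exact add_tsub_cancel_right _ _

theorem count_mul_le {n : ℕ} (π : n.Partition) (d : ℕ) : π.parts.count d * d ≤ n := by
  obtain ⟨rest, h⟩ := Multiset.le_iff_exists_add.mp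
    (Multiset.le_count_iff_replicate_le (a := d) (s := π.parts) |>.mp le_rfl)
  have := congrArg Multiset.sum h
  rw [π.parts_sum, Multiset.sum_add, Multiset.sum_replicate, smul_eq_mul] at this
  omega

theorem sum_count_restricted {n d : ℕ} (hd : 0 < d) (hpd : p d) :
    ∑ π ∈ restricted n p, π.parts.count d = ∑ m ∈ Icc 1 (n / d), #(restricted (n - d * m) p) := by
  have count_eq (π : n.Partition) :
      π.parts.count d = #{m ∈ Icc 1 (n / d) | m ≤ π.parts.count d} := by
    have hc : π.parts.count d ≤ n / d := (Nat.le_div_iff_mul_le hd).mpr (π.count_mul_le d)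
    rw [show {m ∈ Icc 1 (n / d) | m ≤ π.parts.count d} = Icc 1 (π.parts.count d) by grind]
    simp
  rw [sum_congr rfl fun π _ => count_eq π]
  refine (sum_card_bipartiteAbove_eq_sum_card_bipartiteBelow
    (fun (π : n.Partition) m => m ≤ π.parts.count d)).trans (sum_congr rfl fun m hm => ?_)
  refine card_restricted_filter_le_count hd hpd ?_
  exact mul_comm d m ▸ (Nat.le_div_iff_mul_le hd).mp (mem_Icc.mp hm).2

theorem sum_sum_map_parts_restricted {M : Type*} [AddCommMonoid M] (n : ℕ) (f : ℕ → M) :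
    ∑ π ∈ restricted n p, (π.parts.map f).sum =
      ∑ d ∈ Icc 1 n with p d, ∑ m ∈ Icc 1 (n / d), #(restricted (n - d * m) p) • f d := by
  have sum_map_eq (π : n.Partition) (hπ : π ∈ restricted n p) :
      (π.parts.map f).sum = ∑ d ∈ Icc 1 n with p d, π.parts.count d • f d := by
    rw [sum_multiset_map_count]
    refine sum_subset (fun d hd => ?_) fun d _ hd => ?_
    · rw [Multiset.mem_toFinset] at hd
      exact mem_filter.mpr ⟨mem_Icc.mpr ⟨π.parts_pos hd, π.le_of_mem_parts hd⟩,
        mem_restricted.mp hπ d hd⟩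
    · rw [Multiset.count_eq_zero.mpr (Multiset.mem_toFinset.not.mp hd), zero_smul]
  rw [sum_congr rfl sum_map_eq, sum_comm]
  refine sum_congr rfl fun d hd => ?_
  obtain ⟨hd, hpd⟩ := mem_filter.mp hd
  rw [← sum_smul, sum_count_restricted (mem_Icc.mp hd).1 hpd, sum_smul]

end Nat.Partition

theorem oddPartitions_eq_restricted (n : ℕ) : oddPartitions n = Nat.Partition.restricted n Odd :=
  rfl

theorem sum_sum_map_sq_oddPartitions (n : ℕ) :
    ∑ π ∈ oddPartitions n, (π.parts.map (· ^ 2)).sum =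
      ∑ k ∈ Icc 1 n, sigmaOdd 2 k * Qodd (n - k) := by
  have sigmaOdd_mul (k : ℕ) : sigmaOdd 2 k * Qodd (n - k) =
      ∑ d ∈ k.divisors, if Odd d then Qodd (n - k) • d ^ 2 else 0 := by
    rw [sigmaOdd, sum_mul, ← sum_filter]
    simp_rw [smul_eq_mul, mul_comm]
  simp_rw [sigmaOdd_mul]
  rw [Nat.sum_Icc_sum_divisors]
  simp_rw [sum_ite_irrel, sum_const_zero]
  rw [← sum_filter, oddPartitions_eq_restricted]
  exact Nat.Partition.sum_sum_map_parts_restricted n _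

theorem two_mul_ejQ_two_add_sum_sigmaOdd_mul_Qodd (n : ℕ) :
    2 * ejQ 2 n + ∑ k ∈ Icc 1 n, sigmaOdd 2 k * Qodd (n - k) = n ^ 2 * Qodd n := by
  calc 2 * ejQ 2 n + ∑ k ∈ Icc 1 n, sigmaOdd 2 k * Qodd (n - k)
      = ∑ π ∈ oddPartitions n, (2 * π.parts.esymm 2 + (π.parts.map (· ^ 2)).sum) := by
        rw [ejQ, mul_sum, ← sum_sum_map_sq_oddPartitions, sum_add_distrib]
    _ = ∑ π ∈ oddPartitions n, π.parts.sum ^ 2 := by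
        simp_rw [Multiset.sq_sum_eq_sum_map_sq_add_two_mul_esymm_two, add_comm]
    _ = n ^ 2 * Qodd n := by
        simp_rw [Nat.Partition.parts_sum, sum_const, smul_eq_mul, Qodd, mul_comm]

theorem e2Q_formula_general (n : ℕ) :
    (ejQ 2 n : ℚ) =
      (1 / 2) * ((n : ℚ) ^ 2 * (Qodd n : ℚ) -
        ∑ k ∈ Finset.Icc 1 n, (sigmaOdd 2 k : ℚ) * (Qodd (n - k) : ℚ)) := by
  have h := congrArg (Nat.cast : ℕ → ℚ) (two_mul_ejQ_two_add_sum_sigmaOdd_mul_Qodd n)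
  push_cast at h
  linarith

theorem e2Q_formula (n : ℕ) (hn : 0 < n) :
    (ejQ 2 n : ℚ) =
      (1 / 2) * ((n : ℚ) ^ 2 * (Qodd n : ℚ) -
        ∑ k ∈ Finset.Icc 1 n, (sigmaOdd 2 k : ℚ) * (Qodd (n - k) : ℚ)) :=
  e2Q_formula_general n
end

section
/- For every integer n ≥ 0, e_2p_4(n+54) ≡ e_2p_4(n) (mod 3), where e_2p_4(n) is the sum of e_2(λ) over all partitions λ of n with exactly 4 parts. -/
open Finset

/-- `e_2 p_4(n)`, the sum of the second elementary symmetric polynomial evaluated at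
the parts over all partitions of `n` with exactly `4` parts. -/
def e2p4 (n : ℕ) : ℕ :=
  ∑ π ∈ Finset.univ.filter (fun π : Nat.Partition n => Multiset.card π.parts = 4),
    π.parts.esymm 2

/-!
Write `p_k(n)` for the number of partitions of `n` into exactly `k` parts and `S_k(n)` for the
sum of `e_2` over them. Subtracting `1` from every part of a partition without a part `1`, and
deleting a part `1` otherwise, gives
`p_{k+1}(n+k+1) = p_{k+1}(n) + p_k(n+k)` and
`S_{k+1}(n+k+1) = S_{k+1}(n) + (k n + C(k+1, 2)) p_{k+1}(n) + S_k(n+k) + (n+k) p_k(n+k)`.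
Modulo `3` the coefficient `3n + 6` of `p_4(n)` vanishes, so `n mod 3` together with the values
of `p_2, S_2, p_3, S_3, S_4` mod `3` at `n, …, n+3` evolves by a fixed self-map of a finite set,
and a finite computation shows that its orbit starting from `n = 0` returns after `54` steps.
-/

namespace Multiset

theorem sum_map_add_one {R : Type*} [AddCommMonoidWithOne R] (s : Multiset R) :
    (s.map (· + 1)).sum = s.sum + card s := by
  simp [sum_map_add]

section CommSemiring

variable {R : Type*} [CommSemiring R]

theorem esymm_cons (a : R) (s : Multiset R) (n : ℕ) :
    (a ::ₘ s).esymm (n + 1) = s.esymm (n + 1) + a * s.esymm n := by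
  simp [esymm, powersetCard_cons, sum_map_mul_left]

/-- The subtraction-free form of `e₂(s + 1) = e₂(s) + (|s| - 1) e₁(s) + C(|s|, 2)`. -/
theorem esymm_two_map_add_one (s : Multiset R) :
    (s.map (· + 1)).esymm 2 + s.sum = s.esymm 2 + card s * s.sum + (card s).choose 2 := by
  induction s using Multiset.induction_on with
  | empty => simp [esymm]
  | cons a s ih =>
    simp only [map_cons, esymm_two_cons, sum_map_add_one, sum_cons, card_cons,
      Nat.choose_succ_succ', Nat.choose_one_right]
    push_cast
    calc _ = ((s.map (· + 1)).esymm 2 + s.sum) + ((a + 1) * (s.sum + card s) + a) := by ring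
      _ = _ := by rw [ih]; ring

end CommSemiring

theorem map_sub_one_add_one {s : Multiset ℕ} (hpos : ∀ i ∈ s, 0 < i) :
    (s.map (· - 1)).map (· + 1) = s := by
  rw [map_map]
  exact (map_congr rfl fun i hi => Nat.sub_add_cancel (hpos i hi)).trans s.map_id'

end Multiset

/-- Partitions are encoded by their multisets of parts, so that adding `1` to every part or
adjoining a part `1` are plain multiset operations. -/
def partsWithCard (k n : ℕ) : Finset (Multiset ℕ) :=
  (univ.filter fun π : n.Partition => Multiset.card π.parts = k).image Nat.Partition.parts

theorem mem_partsWithCard {k n : ℕ} {s : Multiset ℕ} :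
    s ∈ partsWithCard k n ↔ (∀ i ∈ s, 0 < i) ∧ s.sum = n ∧ Multiset.card s = k := by
  simp only [partsWithCard, mem_image, mem_filter, mem_univ, true_and]
  constructor
  · rintro ⟨π, hk, rfl⟩
    exact ⟨fun _ => π.parts_pos, π.parts_sum, hk⟩
  · rintro ⟨hpos, hsum, hk⟩
    exact ⟨⟨s, hpos _, hsum⟩, hk, rfl⟩

theorem partsWithCard_eq_empty {k n : ℕ} (h : n < k) : partsWithCard k n = ∅ := by
  refine eq_empty_of_forall_notMem fun s hs => ?_
  obtain ⟨hpos, hsum, hk⟩ := mem_partsWithCard.1 hs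
  have := Multiset.card_nsmul_le_sum hpos
  simp only [smul_eq_mul, hk, hsum] at this
  omega

section Recurrence

variable {M : Type*} [AddCommMonoid M] (f : Multiset ℕ → M) (k n : ℕ)

theorem sum_partsWithCard_filter_one_notMem :
    ∑ s ∈ (partsWithCard k (n + k)).filter (1 ∉ ·), f s =
      ∑ s ∈ partsWithCard k n, f (s.map (· + 1)) := by
  refine (sum_nbij' (Multiset.map (· + 1)) (Multiset.map (· - 1)) ?_ ?_ ?_ ?_
    fun _ _ => rfl).symm
  · intro s hs
    obtain ⟨hpos, hsum, hk⟩ := mem_partsWithCard.1 hs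
    simp only [mem_filter, mem_partsWithCard, Multiset.mem_map]
    refine ⟨⟨?_, ?_, by rw [Multiset.card_map, hk]⟩, ?_⟩
    · rintro _ ⟨i, -, rfl⟩
      omega
    · rw [Multiset.sum_map_add_one, hsum, hk, Nat.cast_id]
    · rintro ⟨i, hi, h⟩
      have := hpos i hi
      omega
  · intro t ht
    simp only [mem_filter, mem_partsWithCard] at ht ⊢
    obtain ⟨⟨hpos, hsum, hk⟩, h1⟩ := ht
    have hsum' := Multiset.sum_map_add_one (t.map (· - 1))
    rw [Multiset.map_sub_one_add_one hpos, Multiset.card_map, hsum, hk, Nat.cast_id] at hsum'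
    refine ⟨?_, by omega, by rw [Multiset.card_map, hk]⟩
    simp only [Multiset.mem_map]
    rintro _ ⟨i, hi, rfl⟩
    have := hpos i hi
    have : i ≠ 1 := by rintro rfl; exact h1 hi
    omega
  · intro s _
    simp [Multiset.map_map]
  · intro t ht
    exact Multiset.map_sub_one_add_one (mem_partsWithCard.1 (mem_filter.1 ht).1).1

theorem sum_partsWithCard_filter_one_mem :
    ∑ s ∈ (partsWithCard (k + 1) (n + 1)).filter (1 ∈ ·), f s =
      ∑ s ∈ partsWithCard k n, f (1 ::ₘ s) := by
  refine (sum_nbij' (1 ::ₘ ·) (Multiset.erase · 1) ?_ ?_ ?_ ?_ fun _ _ => rfl).symm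
  · intro s hs
    obtain ⟨hpos, hsum, hk⟩ := mem_partsWithCard.1 hs
    simp only [mem_filter, mem_partsWithCard]
    refine ⟨⟨fun i hi => ?_, ?_, by rw [Multiset.card_cons, hk]⟩, Multiset.mem_cons_self 1 s⟩
    · rcases Multiset.mem_cons.1 hi with rfl | hi
      exacts [Nat.one_pos, hpos i hi]
    · rw [Multiset.sum_cons, hsum, add_comm]
  · intro t ht
    simp only [mem_filter, mem_partsWithCard] at ht ⊢
    obtain ⟨⟨hpos, hsum, hk⟩, h1⟩ := ht
    have hsum' := Multiset.sum_erase h1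
    refine ⟨fun i hi => hpos i (Multiset.mem_of_mem_erase hi), by omega, ?_⟩
    rw [Multiset.card_erase_of_mem h1, hk, Nat.pred_succ]
  · intro s _
    exact Multiset.erase_cons_head 1 s
  · intro t ht
    exact Multiset.cons_erase (mem_filter.1 ht).2

theorem sum_partsWithCard_add_succ :
    ∑ s ∈ partsWithCard (k + 1) (n + k + 1), f s =
      ∑ s ∈ partsWithCard (k + 1) n, f (s.map (· + 1)) +
        ∑ s ∈ partsWithCard k (n + k), f (1 ::ₘ s) := by
  rw [← sum_filter_not_add_sum_filter _ (1 ∈ ·)]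
  exact congrArg₂ (· + ·) (sum_partsWithCard_filter_one_notMem f (k + 1) n)
    (sum_partsWithCard_filter_one_mem f k (n + k))

end Recurrence

def partitionCount (k n : ℕ) : ℕ := (partsWithCard k n).card

def esymmTwoSum (k n : ℕ) : ℕ := ∑ s ∈ partsWithCard k n, s.esymm 2

theorem e2p4_eq_esymmTwoSum (n : ℕ) : e2p4 n = esymmTwoSum 4 n := by
  rw [e2p4, esymmTwoSum, partsWithCard, sum_image fun π _ ρ _ h => Nat.Partition.ext h]

theorem partitionCount_add_succ (k n : ℕ) :
    partitionCount (k + 1) (n + k + 1) = partitionCount (k + 1) n + partitionCount k (n + k) := by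
  simp only [partitionCount, card_eq_sum_ones, sum_partsWithCard_add_succ]

theorem esymmTwoSum_add_succ (k n : ℕ) :
    esymmTwoSum (k + 1) (n + k + 1) =
      esymmTwoSum (k + 1) n + (k * n + (k + 1).choose 2) * partitionCount (k + 1) n +
        esymmTwoSum k (n + k) + (n + k) * partitionCount k (n + k) := by
  have hmap : ∀ s ∈ partsWithCard (k + 1) n,
      (s.map (· + 1)).esymm 2 = s.esymm 2 + (k * n + (k + 1).choose 2) := by
    intro s hs
    obtain ⟨-, hsum, hk⟩ := mem_partsWithCard.1 hs
    have := Multiset.esymm_two_map_add_one s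
    rw [hsum, hk, Nat.cast_id] at this
    linarith
  have hcons : ∀ s ∈ partsWithCard k (n + k), (1 ::ₘ s).esymm 2 = s.esymm 2 + (n + k) := by
    intro s hs
    rw [Multiset.esymm_two_cons, one_mul, (mem_partsWithCard.1 hs).2.1]
  rw [esymmTwoSum, sum_partsWithCard_add_succ, sum_congr rfl hmap, sum_congr rfl hcons]
  simp only [sum_add_distrib, sum_const, smul_eq_mul, esymmTwoSum, partitionCount]
  ring

theorem partitionCount_eq_zero {k n : ℕ} (h : n < k) : partitionCount k n = 0 := by
  rw [partitionCount, partsWithCard_eq_empty h, card_empty]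

theorem esymmTwoSum_eq_zero {k n : ℕ} (h : n < k) : esymmTwoSum k n = 0 := by
  rw [esymmTwoSum, partsWithCard_eq_empty h, sum_empty]

theorem partitionCount_one (n : ℕ) : partitionCount 1 (n + 1) = 1 := by
  rw [partitionCount, card_eq_one]
  refine ⟨{n + 1}, eq_singleton_iff_unique_mem.2 ⟨by simp [mem_partsWithCard], fun s hs => ?_⟩⟩
  obtain ⟨-, hsum, hk⟩ := mem_partsWithCard.1 hs
  obtain ⟨a, rfl⟩ := Multiset.card_eq_one.1 hk
  simp_all

theorem esymmTwoSum_one (n : ℕ) : esymmTwoSum 1 n = 0 := by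
  refine sum_eq_zero fun s hs => ?_
  obtain ⟨a, rfl⟩ := Multiset.card_eq_one.1 (mem_partsWithCard.1 hs).2.2
  simp [Multiset.esymm]

theorem cast_esymmTwoSum_four_add_four (n : ℕ) : (esymmTwoSum 4 (n + 4) : ZMod 3) =
    esymmTwoSum 4 n + esymmTwoSum 3 (n + 3) + (n + 3) * partitionCount 3 (n + 3) := by
  have h := congrArg (Nat.cast : ℕ → ZMod 3) (esymmTwoSum_add_succ 3 n)
  push_cast [add_assoc, Nat.choose_two_right] at h
  have h3 : (3 : ZMod 3) = 0 := rfl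
  linear_combination h + ((n : ZMod 3) + 2) * (partitionCount 4 n : ZMod 3) * h3

@[ext]
structure Window where
  m : ZMod 3
  p₂ : Fin 4 → ZMod 3
  e₂ : Fin 4 → ZMod 3
  p₃ : Fin 4 → ZMod 3
  e₃ : Fin 4 → ZMod 3
  e₄ : Fin 4 → ZMod 3

def window (n : ℕ) : Window where
  m := n
  p₂ i := partitionCount 2 (n + i)
  e₂ i := esymmTwoSum 2 (n + i)
  p₃ i := partitionCount 3 (n + i)
  e₃ i := esymmTwoSum 3 (n + i)
  e₄ i := esymmTwoSum 4 (n + i)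

/-- On `window n`, the new entries are the values at `n + 4` given by `partitionCount_add_succ`
and `esymmTwoSum_add_succ` for `k = 1, 2, 3`, read modulo `3`; `p₄` is not needed because its
coefficient `3n + 6` vanishes. -/
def Window.step (w : Window) : Window where
  m := w.m + 1
  p₂ := Fin.snoc (Fin.tail w.p₂) (w.p₂ 2 + 1)
  e₂ := Fin.snoc (Fin.tail w.e₂) (w.e₂ 2 + (w.m + 3) * (w.p₂ 2 + 1))
  p₃ := Fin.snoc (Fin.tail w.p₃) (w.p₃ 1 + w.p₂ 3)
  e₃ := Fin.snoc (Fin.tail w.e₃)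
    (w.e₃ 1 + (2 * w.m + 5) * w.p₃ 1 + w.e₂ 3 + (w.m + 3) * w.p₂ 3)
  e₄ := Fin.snoc (Fin.tail w.e₄) (w.e₄ 0 + w.e₃ 3 + (w.m + 3) * w.p₃ 3)

theorem Fin.snoc_tail_comp_add {α : Type*} (f : ℕ → α) (n k : ℕ) :
    Fin.snoc (Fin.tail fun i : Fin (k + 1) => f (n + i)) (f (n + k + 1)) =
      fun i : Fin (k + 1) => f (n + 1 + i) := by
  funext i
  refine Fin.lastCases ?_ (fun i => ?_) i
  · rw [Fin.snoc_last, Fin.val_last, add_right_comm]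
  · rw [Fin.snoc_castSucc, Fin.tail, Fin.val_succ, Fin.val_castSucc, add_assoc, add_comm 1]

theorem window_succ (n : ℕ) : window (n + 1) = (window n).step := by
  have hp₂ : (partitionCount 2 (n + 4) : ZMod 3) = partitionCount 2 (n + 2) + 1 := by
    have h := congrArg (Nat.cast : ℕ → ZMod 3) (partitionCount_add_succ 1 (n + 2))
    push_cast [add_assoc, partitionCount_one] at h
    linear_combination h
  have he₂ : (esymmTwoSum 2 (n + 4) : ZMod 3) =
      esymmTwoSum 2 (n + 2) + (n + 3) * (partitionCount 2 (n + 2) + 1) := by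
    have h := congrArg (Nat.cast : ℕ → ZMod 3) (esymmTwoSum_add_succ 1 (n + 2))
    push_cast [add_assoc, Nat.choose_two_right, partitionCount_one, esymmTwoSum_one] at h
    linear_combination h
  have hp₃ : (partitionCount 3 (n + 4) : ZMod 3) =
      partitionCount 3 (n + 1) + partitionCount 2 (n + 3) := by
    have h := congrArg (Nat.cast : ℕ → ZMod 3) (partitionCount_add_succ 2 (n + 1))
    push_cast [add_assoc] at h
    linear_combination h
  have he₃ : (esymmTwoSum 3 (n + 4) : ZMod 3) = esymmTwoSum 3 (n + 1) +
      (2 * n + 5) * partitionCount 3 (n + 1) + esymmTwoSum 2 (n + 3) +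
        (n + 3) * partitionCount 2 (n + 3) := by
    have h := congrArg (Nat.cast : ℕ → ZMod 3) (esymmTwoSum_add_succ 2 (n + 1))
    push_cast [add_assoc, Nat.choose_two_right] at h
    linear_combination h
  ext : 1
  · exact Nat.cast_succ n
  · exact (Fin.snoc_tail_comp_add (fun j => (partitionCount 2 j : ZMod 3)) n 3).symm.trans
      (congrArg _ hp₂)
  · exact (Fin.snoc_tail_comp_add (fun j => (esymmTwoSum 2 j : ZMod 3)) n 3).symm.trans
      (congrArg _ he₂)
  · exact (Fin.snoc_tail_comp_add (fun j => (partitionCount 3 j : ZMod 3)) n 3).symm.trans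
      (congrArg _ hp₃)
  · exact (Fin.snoc_tail_comp_add (fun j => (esymmTwoSum 3 j : ZMod 3)) n 3).symm.trans
      (congrArg _ he₃)
  · exact (Fin.snoc_tail_comp_add (fun j => (esymmTwoSum 4 j : ZMod 3)) n 3).symm.trans
      (congrArg _ (cast_esymmTwoSum_four_add_four n))

theorem window_zero :
    window 0 = ⟨0, ![0, 0, 1, 1], ![0, 0, 1, 2], ![0, 0, 0, 1], ![0, 0, 0, 0], ![0, 0, 0, 0]⟩ := by
  have hp₂₂ : partitionCount 2 2 = 1 := by
    have h := partitionCount_add_succ 1 0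
    rw [partitionCount_one] at h
    simpa [partitionCount_eq_zero] using h
  have hp₂₃ : partitionCount 2 3 = 1 := by
    have h := partitionCount_add_succ 1 1
    rw [partitionCount_one] at h
    simpa [partitionCount_eq_zero] using h
  have he₂₂ : esymmTwoSum 2 2 = 1 := by
    have h := esymmTwoSum_add_succ 1 0
    rw [partitionCount_one] at h
    simpa [partitionCount_eq_zero, esymmTwoSum_eq_zero, esymmTwoSum_one] using h
  have he₂₃ : esymmTwoSum 2 3 = 2 := by
    have h := esymmTwoSum_add_succ 1 1
    rw [partitionCount_one] at h
    simpa [partitionCount_eq_zero, esymmTwoSum_eq_zero, esymmTwoSum_one] using h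
  have hp₃₃ : partitionCount 3 3 = 1 := by
    simpa [partitionCount_eq_zero, hp₂₂] using partitionCount_add_succ 2 0
  have he₃₃ : esymmTwoSum 3 3 = 3 := by
    simpa [partitionCount_eq_zero, esymmTwoSum_eq_zero, hp₂₂, he₂₂] using esymmTwoSum_add_succ 2 0
  ext i
  · exact Nat.cast_zero
  all_goals fin_cases i <;>
    simp (disch := decide) only [window, zero_add, partitionCount_eq_zero, esymmTwoSum_eq_zero,
      hp₂₂, hp₂₃, he₂₂, he₂₃, hp₃₃, he₃₃] <;> rfl

theorem window_eq_iterate (n : ℕ) : window n = Window.step^[n] (window 0) := by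
  induction n with
  | zero => rfl
  | succ n ih => rw [window_succ, ih, Function.iterate_succ_apply']

set_option maxRecDepth 2000 in
theorem window_zero_isPeriodicPt : Function.IsPeriodicPt Window.step 54 (window 0) := by
  rw [window_zero]
  ext : 1 <;> decide

theorem window_periodic : Function.Periodic window 54 := fun n => by
  rw [window_eq_iterate, window_eq_iterate n, Function.iterate_add_apply,
    window_zero_isPeriodicPt.eq]

theorem e2p4_period_mod_three (n : ℕ) : e2p4 (n + 54) ≡ e2p4 n [MOD 3] := by
  rw [← ZMod.natCast_eq_natCast_iff, e2p4_eq_esymmTwoSum, e2p4_eq_esymmTwoSum]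
  exact congrArg (fun w => w.e₄ 0) (window_periodic n)
end

section
/- For all integers n, j ≥ 2, e_jB(n) ≡ C(n-2, j-2) (mod 2), where C denotes the binomial coefficient. -/
open Finset
open scoped Classical

/-- The finset of binary partitions of `n` (all parts are powers of `2`). -/
noncomputable def binaryPartitions (n : ℕ) : Finset (Nat.Partition n) :=
  Finset.univ.filter fun π => ∀ i ∈ π.parts, ∃ k : ℕ, i = 2 ^ k

/-- `B(n)`, the number of binary partitions of `n`. -/
noncomputable def Bbin (n : ℕ) : ℕ := (binaryPartitions n).card

/-- `e_j B(n)`, the sum of the `j`-th elementary symmetric polynomial evaluated at the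
parts over all binary partitions of `n`. -/
noncomputable def ejB (j n : ℕ) : ℕ := ∑ π ∈ binaryPartitions n, π.parts.esymm j

/-- `σ_{j,bin}(n) = Σ_{d ≥ 0, 2^d ∣ n} 2^{d·j}`. -/
def sigmaBin (j n : ℕ) : ℕ :=
  ∑ d ∈ (Finset.range (n + 1)).filter (fun d => 2 ^ d ∣ n), 2 ^ (d * j)

namespace EjbAux

lemma esymm_cons (a : ℕ) (s : Multiset ℕ) (j : ℕ) :
    (a ::ₘ s).esymm (j+1) = s.esymm (j+1) + a * s.esymm j := by
  simp only [Multiset.esymm, Multiset.powersetCard_cons, Multiset.map_add, Multiset.sum_add,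
    Multiset.map_map, Function.comp_def, Multiset.prod_cons]
  rw [Multiset.sum_map_mul_left]

lemma esymm_parity (s : Multiset ℕ) (hs : ∀ i ∈ s, ∃ k : ℕ, i = 2 ^ k) (j : ℕ) :
    ((s.esymm j : ℕ) : ZMod 2) = ((s.count 1).choose j : ZMod 2) := by
  induction s using Multiset.induction_on generalizing j with
  | empty =>
    cases j with
    | zero => simp [Multiset.esymm, Multiset.powersetCard_zero_left]
    | succ j => simp [Multiset.esymm, Multiset.powersetCard_zero_right]
  | cons a s ih =>
    have hbin : ∀ i ∈ s, ∃ k : ℕ, i = 2 ^ k := fun i hi => hs i (Multiset.mem_cons_of_mem hi)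
    obtain ⟨k, rfl⟩ := hs _ (Multiset.mem_cons_self a s)
    cases j with
    | zero => simp [Multiset.esymm, Multiset.powersetCard_zero_left]
    | succ j =>
      rw [esymm_cons]
      push_cast
      rw [ih hbin, ih hbin]
      cases k with
      | zero =>
        simp only [pow_zero, Multiset.count_cons_self, Nat.cast_one, one_mul]
        rw [Nat.choose_succ_succ (Multiset.count 1 s) j]
        push_cast
        ring
      | succ k =>
        have hne : (1 : ℕ) ≠ 2 ^ (k+1) := by
          have := Nat.one_lt_two_pow' k
          omega
        rw [Multiset.count_cons_of_ne hne]
        have h2 : ((2 : ZMod 2)) = 0 := rfl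
        rw [h2]
        simp

/-- Binary partitions as a finset of multisets. -/
noncomputable def Mb (n : ℕ) : Finset (Multiset ℕ) :=
  (binaryPartitions n).image Nat.Partition.parts

lemma mem_Mb {n : ℕ} {t : Multiset ℕ} :
    t ∈ Mb n ↔ t.sum = n ∧ ∀ i ∈ t, ∃ k : ℕ, i = 2 ^ k := by
  constructor
  · rintro ht
    obtain ⟨π, hπ, rfl⟩ := Finset.mem_image.1 ht
    exact ⟨π.parts_sum, (Finset.mem_filter.1 hπ).2⟩
  · rintro ⟨hsum, hbin⟩
    refine Finset.mem_image.2 ⟨⟨t, ?_, hsum⟩, ?_, rfl⟩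
    · intro i hi
      obtain ⟨k, rfl⟩ := hbin i hi
      positivity
    · exact Finset.mem_filter.2 ⟨Finset.mem_univ _, hbin⟩

lemma sum_parts {M : Type*} [AddCommMonoid M] (n : ℕ) (w : Multiset ℕ → M) :
    ∑ π ∈ binaryPartitions n, w π.parts = ∑ t ∈ Mb n, w t := by
  rw [Mb, Finset.sum_image]
  intro x _ y _ h
  exact Nat.Partition.ext h

lemma card_Mb (n : ℕ) : (Mb n).card = Bbin n := by
  rw [Bbin, Mb, Finset.card_image_of_injOn]
  intro x _ y _ h
  exact Nat.Partition.ext h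

lemma pow2_ne_one_structure {x : ℕ} (hx : ∃ k : ℕ, x = 2 ^ k) (h1 : x ≠ 1) :
    ∃ k' : ℕ, x = 2 * 2 ^ k' := by
  obtain ⟨k, rfl⟩ := hx
  cases k with
  | zero => simp at h1
  | succ k => exact ⟨k, by rw [pow_succ, mul_comm]⟩

/-- The key bijection: summing a weight over binary partitions of `n` equals summing over
the number of non-one parts structure. -/
lemma key {M : Type*} [AddCommMonoid M] (n : ℕ) (w : Multiset ℕ → M) :
    ∑ t ∈ Mb n, w t
      = ∑ u ∈ Finset.range (n/2 + 1), ∑ μ ∈ Mb u,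
          w (Multiset.replicate (n - 2*u) 1 + μ.map (fun x => 2 * x)) := by
  rw [Finset.sum_sigma']
  refine (Finset.sum_nbij'
    (i := fun x => Multiset.replicate (n - 2*x.1) 1 + x.2.map (fun y => 2 * y))
    (j := fun t => (⟨((t.filter (fun x => x ≠ 1)).map (fun x => x / 2)).sum,
        (t.filter (fun x => x ≠ 1)).map (fun x => x / 2)⟩ : Σ _ : ℕ, Multiset ℕ))
    ?_ ?_ ?_ ?_ ?_).symm
  · -- maps into Mb n
    rintro ⟨u, μ⟩ hx
    rw [Finset.mem_sigma] at hx
    obtain ⟨hu, hμ⟩ := hx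
    dsimp only at hu hμ
    rw [Finset.mem_range, Nat.lt_succ_iff] at hu
    have h2u : 2 * u ≤ n := by
      have := Nat.div_mul_le_self n 2
      omega
    obtain ⟨hsum, hbin⟩ := mem_Mb.1 hμ
    dsimp only
    refine mem_Mb.2 ⟨?_, ?_⟩
    · rw [Multiset.sum_add, Multiset.sum_replicate, smul_eq_mul, mul_one,
        Multiset.sum_map_mul_left, Multiset.map_id', hsum]
      omega
    · intro i hi
      rcases Multiset.mem_add.1 hi with hi | hi
      · rw [Multiset.eq_of_mem_replicate hi]
        exact ⟨0, rfl⟩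
      · obtain ⟨y, hy, rfl⟩ := Multiset.mem_map.1 hi
        obtain ⟨k, rfl⟩ := hbin y hy
        exact ⟨k+1, by rw [pow_succ, mul_comm]⟩
  · -- maps into sigma
    intro t ht
    obtain ⟨hsum, hbin⟩ := mem_Mb.1 ht
    have heven : ∀ x ∈ t.filter (fun x => x ≠ 1), 2 * (x / 2) = x := by
      intro x hx
      rw [Multiset.mem_filter] at hx
      obtain ⟨k', rfl⟩ := pow2_ne_one_structure (hbin x hx.1) hx.2
      simp [Nat.mul_div_cancel_left _ (by norm_num : 0 < 2)]
    have hdouble : 2 * ((t.filter (fun x => x ≠ 1)).map (fun x => x / 2)).sum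
        = (t.filter (fun x => x ≠ 1)).sum := by
      rw [← Multiset.sum_map_mul_left]
      rw [show ((t.filter (fun x => x ≠ 1)).map fun i => 2 * (i / 2))
          = (t.filter (fun x => x ≠ 1)).map id from Multiset.map_congr rfl
            (fun x hx => heven x hx), Multiset.map_id]
    rw [Finset.mem_sigma]
    dsimp only
    constructor
    · rw [Finset.mem_range, Nat.lt_succ_iff, Nat.le_div_iff_mul_le (by norm_num)]
      obtain ⟨r, hr⟩ := Multiset.le_iff_exists_add.1 (Multiset.filter_le (fun x => x ≠ 1) t)
      have hle : (t.filter (fun x => x ≠ 1)).sum ≤ t.sum := by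
        have h' := congrArg Multiset.sum hr
        rw [Multiset.sum_add] at h'
        omega
      omega
    · refine mem_Mb.2 ⟨rfl, ?_⟩
      intro i hi
      obtain ⟨x, hx, rfl⟩ := Multiset.mem_map.1 hi
      rw [Multiset.mem_filter] at hx
      obtain ⟨k', hk'⟩ := pow2_ne_one_structure (hbin x hx.1) hx.2
      exact ⟨k', by rw [hk', Nat.mul_div_cancel_left _ (by norm_num : 0 < 2)]⟩
  · -- left inverse : j (i x) = x
    rintro ⟨u, μ⟩ hx
    rw [Finset.mem_sigma] at hx
    obtain ⟨hu, hμ⟩ := hx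
    dsimp only at hu hμ
    obtain ⟨hsum, hbin⟩ := mem_Mb.1 hμ
    have hfilt : (Multiset.replicate (n - 2*u) 1 + μ.map (fun y => 2 * y)).filter
        (fun x => x ≠ 1) = μ.map (fun y => 2 * y) := by
      rw [Multiset.filter_add]
      rw [Multiset.filter_eq_nil.2 (fun a ha => by
        simp only [Decidable.not_not]
        exact Multiset.eq_of_mem_replicate ha)]
      rw [Multiset.filter_eq_self.2 (fun a ha => by
        obtain ⟨y, hy, rfl⟩ := Multiset.mem_map.1 ha
        omega)]
      rw [zero_add]
    have hmm : ((μ.map (fun y => 2 * y)).map (fun x => x / 2)) = μ := by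
      rw [Multiset.map_map]
      rw [show ((fun x => x / 2) ∘ fun y => 2 * y) = id from funext fun y => by
        simp [Nat.mul_div_cancel_left _ (by norm_num : 0 < 2)]]
      exact Multiset.map_id μ
    dsimp only
    refine Sigma.ext ?_ ?_
    · simp only [hfilt, hmm, hsum]
    · simp only [hfilt, hmm]
      exact heq_of_eq rfl
  · -- right inverse : i (j t) = t
    intro t ht
    obtain ⟨hsum, hbin⟩ := mem_Mb.1 ht
    have heven : ∀ x ∈ t.filter (fun x => x ≠ 1), 2 * (x / 2) = x := by
      intro x hx
      rw [Multiset.mem_filter] at hx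
      obtain ⟨k', rfl⟩ := pow2_ne_one_structure (hbin x hx.1) hx.2
      simp [Nat.mul_div_cancel_left _ (by norm_num : 0 < 2)]
    have hback : ((t.filter (fun x => x ≠ 1)).map (fun x => x / 2)).map (fun y => 2 * y)
        = t.filter (fun x => x ≠ 1) := by
      rw [Multiset.map_map]
      calc ((t.filter (fun x => x ≠ 1)).map ((fun y => 2*y) ∘ fun x => x / 2))
          = (t.filter (fun x => x ≠ 1)).map id :=
            Multiset.map_congr rfl (fun x hx => heven x hx)
        _ = _ := Multiset.map_id _
    have hdouble : 2 * ((t.filter (fun x => x ≠ 1)).map (fun x => x / 2)).sum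
        = (t.filter (fun x => x ≠ 1)).sum := by
      rw [← Multiset.sum_map_mul_left]
      rw [show ((t.filter (fun x => x ≠ 1)).map fun i => 2 * (i / 2))
          = (t.filter (fun x => x ≠ 1)).map id from Multiset.map_congr rfl
            (fun x hx => heven x hx), Multiset.map_id]
    have hones : t.filter (fun x => ¬ x ≠ 1) = Multiset.replicate (t.count 1) 1 := by
      rw [Multiset.filter_congr (fun x _ => by simp : ∀ x ∈ t, (¬ x ≠ 1) ↔ x = 1)]
      exact Multiset.filter_eq' t 1
    have hcount : t.count 1 = n - 2 * ((t.filter (fun x => x ≠ 1)).map (fun x => x / 2)).sum := by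
      have hsplit : t.filter (fun x => x ≠ 1) + t.filter (fun x => ¬ x ≠ 1) = t :=
        Multiset.filter_add_not _ t
      have := congrArg Multiset.sum hsplit
      rw [Multiset.sum_add, hones, Multiset.sum_replicate, smul_eq_mul, mul_one, hsum] at this
      omega
    simp only
    rw [hback, ← hcount, ← hones]
    rw [add_comm]
    exact Multiset.filter_add_not _ t
  · intro x hx
    rfl

lemma Bbin_rec (n : ℕ) : Bbin n = ∑ u ∈ Finset.range (n/2 + 1), Bbin u := by
  have h := key (M := ℕ) n (fun _ => 1)
  rw [← card_Mb, Finset.card_eq_sum_ones, h]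
  exact Finset.sum_congr rfl fun u _ => by rw [← Finset.card_eq_sum_ones, card_Mb]

lemma Bbin_zero : Bbin 0 = 1 := by
  rw [Bbin, binaryPartitions]
  rw [Finset.filter_true_of_mem (fun π _ => by simp)]
  simp

lemma Bbin_one : Bbin 1 = 1 := by
  rw [Bbin, binaryPartitions]
  rw [Finset.filter_true_of_mem (fun π _ => by
    intro i hi
    rw [Nat.Partition.partition_one_parts π] at hi
    simp only [Multiset.mem_singleton] at hi
    exact ⟨0, by simp [hi]⟩)]
  simp

lemma Bbin_even : ∀ n : ℕ, 2 ≤ n → ((Bbin n : ℕ) : ZMod 2) = 0 := by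
  intro n
  induction n using Nat.strong_induction_on with
  | _ n ih =>
    intro hn
    rw [Bbin_rec n]
    push_cast
    rw [← Finset.sum_subset (s₁ := ({0, 1} : Finset ℕ))
      (by
        intro x hx
        simp only [Finset.mem_insert, Finset.mem_singleton] at hx
        rw [Finset.mem_range]
        rcases hx with rfl | rfl
        · omega
        · have : 1 ≤ n / 2 := by omega
          omega)
      (by
        intro x hxr hx
        simp only [Finset.mem_insert, Finset.mem_singleton, not_or] at hx
        have hx2 : 2 ≤ x := by omega
        have hxn : x < n := by
          rw [Finset.mem_range, Nat.lt_succ_iff] at hxr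
          have := Nat.div_lt_self (by omega : 0 < n) (by norm_num : 1 < 2)
          omega
        exact ih x hxn hx2)]
    rw [Finset.sum_pair (by norm_num : (0:ℕ) ≠ 1), Bbin_zero, Bbin_one]
    decide

theorem ejB_mod_two' (n j : ℕ) (hn : 2 ≤ n) (hj : 2 ≤ j) :
    ((ejB j n : ℕ) : ZMod 2) = ((Nat.choose (n - 2) (j - 2) : ℕ) : ZMod 2) := by
  rw [ejB]
  push_cast
  rw [show ∑ π ∈ binaryPartitions n, ((π.parts.esymm j : ℕ) : ZMod 2)
      = ∑ π ∈ binaryPartitions n, (((π.parts.count 1).choose j : ℕ) : ZMod 2) from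
    Finset.sum_congr rfl fun π hπ =>
      esymm_parity π.parts ((Finset.mem_filter.1 hπ).2) j]
  rw [sum_parts n (fun t => (((t.count 1).choose j : ℕ) : ZMod 2))]
  rw [key n (fun t => (((t.count 1).choose j : ℕ) : ZMod 2))]
  have hcount : ∀ u : ℕ, ∀ μ ∈ Mb u,
      (Multiset.replicate (n - 2*u) 1 + μ.map (fun x => 2 * x)).count 1 = n - 2*u := by
    intro u μ hμ
    rw [Multiset.count_add, Multiset.count_replicate]
    simp only [if_pos rfl]
    have hz : (μ.map (fun x => 2 * x)).count 1 = 0 := Multiset.count_eq_zero.2 (by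
      intro h1
      obtain ⟨y, _, hy⟩ := Multiset.mem_map.1 h1
      omega)
    simp [hz]
  have hinner : ∀ u ∈ Finset.range (n/2 + 1),
      (∑ μ ∈ Mb u, ((((Multiset.replicate (n - 2*u) 1 + μ.map (fun x => 2 * x)).count 1).choose j
          : ℕ) : ZMod 2))
      = (Bbin u : ZMod 2) * (((n - 2*u).choose j : ℕ) : ZMod 2) := by
    intro u _
    rw [Finset.sum_congr rfl (fun μ hμ => by rw [hcount u μ hμ])]
    rw [Finset.sum_const, card_Mb, nsmul_eq_mul]
  rw [Finset.sum_congr rfl hinner]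
  rw [← Finset.sum_subset (s₁ := ({0, 1} : Finset ℕ))
    (by
      intro x hx
      simp only [Finset.mem_insert, Finset.mem_singleton] at hx
      rw [Finset.mem_range]
      rcases hx with rfl | rfl
      · omega
      · have : 1 ≤ n / 2 := by omega
        omega)
    (by
      intro x hxr hx
      simp only [Finset.mem_insert, Finset.mem_singleton, not_or] at hx
      have hx2 : 2 ≤ x := by omega
      have hxn : x < n := by
        rw [Finset.mem_range, Nat.lt_succ_iff] at hxr
        have := Nat.div_lt_self (by omega : 0 < n) (by norm_num : 1 < 2)
        omega
      rw [Bbin_even x hx2, zero_mul])]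
  rw [Finset.sum_pair (by norm_num : (0:ℕ) ≠ 1)]
  rw [Bbin_zero, Bbin_one]
  simp only [Nat.cast_one, one_mul, mul_zero, Nat.mul_zero, Nat.sub_zero, mul_one]
  -- now : ↑(n.choose j) + ↑((n-2).choose j) = ↑((n-2).choose (j-2))
  obtain ⟨m, rfl⟩ : ∃ m, n = m + 2 := ⟨n - 2, by omega⟩
  obtain ⟨i, rfl⟩ : ∃ i, j = i + 2 := ⟨j - 2, by omega⟩
  have hid : (m+2).choose (i+2) = m.choose (i+2) + 2 * m.choose (i+1) + m.choose i := by
    rw [Nat.choose_succ_succ (m+1) (i+1), Nat.choose_succ_succ m i,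
      Nat.choose_succ_succ m (i+1)]
    ring
  rw [show m + 2 - 2 = m from by omega, show i + 2 - 2 = i from by omega]
  have key2 : ((m+2).choose (i+2) + m.choose (i+2) : ℕ)
      = 2 * (m.choose (i+2) + m.choose (i+1)) + m.choose i := by rw [hid]; ring
  calc (((m+2).choose (i+2) : ZMod 2) + ((m.choose (i+2) : ℕ) : ZMod 2))
      = ((((m+2).choose (i+2) + m.choose (i+2) : ℕ)) : ZMod 2) := by push_cast; ring
    _ = ((2 * (m.choose (i+2) + m.choose (i+1)) + m.choose i : ℕ) : ZMod 2) := by rw [key2]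
    _ = ((m.choose i : ℕ) : ZMod 2) := by
        push_cast
        rw [show ((2 : ZMod 2)) = 0 from rfl]
        ring

end EjbAux

theorem ejB_mod_two (n j : ℕ) (hn : 2 ≤ n) (hj : 2 ≤ j) :
    ejB j n ≡ Nat.choose (n - 2) (j - 2) [MOD 2] := by
  rw [← ZMod.natCast_eq_natCast_iff]
  exact EjbAux.ejB_mod_two' n j hn hj
end

section
/- For every integer n ≥ 2, e_3B(n) ≡ n (mod 2), where e_3B(n) is the sum of the third elementary symmetric polynomial evaluated at the parts of λ over all binary partitions λ of n. -/
open Finset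
open scoped Classical

section Aux
open Multiset

lemma esymm_cons (a : ℕ) (s : Multiset ℕ) (j : ℕ) :
    (a ::ₘ s).esymm (j + 1) = s.esymm (j + 1) + a * s.esymm j := by
  simp only [Multiset.esymm, powersetCard_cons, Multiset.map_add, Multiset.sum_add,
    Multiset.map_map, Function.comp]
  congr 1
  rw [← Multiset.sum_map_mul_left]
  apply congr_arg
  apply Multiset.map_congr rfl
  intro t _
  simp [Multiset.prod_cons]

lemma esymm_zero' (s : Multiset ℕ) : s.esymm 0 = 1 := by
  simp [Multiset.esymm]

lemma esymm_empty (j : ℕ) : (0 : Multiset ℕ).esymm (j + 1) = 0 := by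
  simp [Multiset.esymm, Multiset.powersetCard_zero_right]

/-- key: binary multiset esymm parity -/
lemma esymm_mod_two (s : Multiset ℕ) (hs : ∀ i ∈ s, ∃ k : ℕ, i = 2 ^ k) (j : ℕ) :
    ((s.esymm j : ℕ) : ZMod 2) = ((s.count 1).choose j : ZMod 2) := by
  induction s using Multiset.induction generalizing j with
  | empty =>
    cases j with
    | zero => simp [esymm_zero']
    | succ j => simp [esymm_empty]
  | cons a t ih =>
    have ha := hs a (Multiset.mem_cons_self a t)
    have ht : ∀ i ∈ t, ∃ k : ℕ, i = 2 ^ k := fun i hi => hs i (Multiset.mem_cons_of_mem hi)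
    obtain ⟨k, rfl⟩ := ha
    cases j with
    | zero => simp [esymm_zero']
    | succ j =>
      rw [esymm_cons]
      push_cast
      rw [ih ht, ih ht]
      cases k with
      | zero =>
        simp only [pow_zero, Multiset.count_cons_self, Nat.cast_one, one_mul]
        rw [Nat.choose_succ_succ]
        push_cast
        ring
      | succ k =>
        have h2 : ((2:ZMod 2)) ^ (k+1) = 0 := by
          have : (2:ZMod 2) = 0 := by decide
          rw [this, zero_pow (Nat.succ_ne_zero k)]
        have hne : (1:ℕ) ≠ 2 ^ (k+1) := by
          have := Nat.one_lt_two_pow (n := k+1) (by omega)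
          omega
        rw [Multiset.count_cons_of_ne hne, h2]
        ring


lemma mem_binP {n : ℕ} {π : Nat.Partition n} :
    π ∈ binaryPartitions n ↔ ∀ i ∈ π.parts, ∃ k : ℕ, i = 2 ^ k := by
  simp [binaryPartitions]

lemma parts_of_zero (π : Nat.Partition 0) : π.parts = 0 := by
  apply Multiset.eq_zero_of_forall_notMem
  intro a ha
  have h1 := π.parts_pos ha
  have := Multiset.sum_eq_zero_iff.mp π.parts_sum a ha
  omega

lemma parts_of_one (π : Nat.Partition 1) : π.parts = {1} := by
  have hs := π.parts_sum
  have hne : π.parts ≠ 0 := by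
    intro h; rw [h] at hs; simp at hs
  obtain ⟨a, ha⟩ := Multiset.exists_mem_of_ne_zero hne
  have hle : a ≤ π.parts.sum := Multiset.single_le_sum (fun x _ => Nat.zero_le x) a ha
  have hpos := π.parts_pos ha
  have ha1 : a = 1 := by omega
  subst ha1
  have hc := Multiset.cons_erase ha
  have hsum : 1 + (π.parts.erase 1).sum = 1 := by
    rw [← Multiset.sum_cons, hc]; exact hs
  have hz : π.parts.erase 1 = 0 := by
    apply Multiset.eq_zero_of_forall_notMem
    intro b hb
    have := Multiset.sum_eq_zero_iff.mp (by omega : (π.parts.erase 1).sum = 0) b hb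
    have := π.parts_pos (Multiset.mem_of_mem_erase hb)
    omega
  rw [← hc, hz]
  rfl

def P0 : Nat.Partition 0 := ⟨0, by simp, rfl⟩
def P1 : Nat.Partition 1 := ⟨{1}, by intro i hi; simp at hi; omega, rfl⟩

lemma binP_zero : binaryPartitions 0 = {P0} := by
  apply Finset.ext
  intro π
  simp only [Finset.mem_singleton, mem_binP]
  constructor
  · intro _; exact Nat.Partition.ext (parts_of_zero π)
  · rintro rfl; intro i hi; simp [P0] at hi

lemma binP_one : binaryPartitions 1 = {P1} := by
  apply Finset.ext
  intro π
  simp only [Finset.mem_singleton, mem_binP]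
  constructor
  · intro _; exact Nat.Partition.ext (parts_of_one π)
  · rintro rfl; intro i hi
    simp only [P1, Multiset.mem_singleton] at hi
    exact ⟨0, by simp [hi]⟩

/-- remove a part equal to 1 -/
def eraseOne {n : ℕ} (π : Nat.Partition (n + 1)) (h : 1 ∈ π.parts) : Nat.Partition n where
  parts := π.parts.erase 1
  parts_pos := fun hi => π.parts_pos (Multiset.mem_of_mem_erase hi)
  parts_sum := by
    have : 1 + (π.parts.erase 1).sum = n + 1 := by
      rw [← Multiset.sum_cons, Multiset.cons_erase h]; exact π.parts_sum
    omega

/-- add a part equal to 1 -/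
def addOne {n : ℕ} (σ : Nat.Partition n) : Nat.Partition (n + 1) where
  parts := 1 ::ₘ σ.parts
  parts_pos := fun hi => by
    rcases Multiset.mem_cons.mp hi with h | h
    · omega
    · exact σ.parts_pos h
  parts_sum := by rw [Multiset.sum_cons, σ.parts_sum]; omega

/-- halve all parts of an even binary partition with no part 1 -/
def halve {n m : ℕ} (hm : n = 2 * m) (π : Nat.Partition n)
    (hbin : ∀ i ∈ π.parts, ∃ k : ℕ, i = 2 ^ k) (h1 : 1 ∉ π.parts) : Nat.Partition m where
  parts := π.parts.map (· / 2)
  parts_pos := fun hi => by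
    obtain ⟨x, hx, rfl⟩ := Multiset.mem_map.mp hi
    obtain ⟨k, rfl⟩ := hbin x hx
    have hk : k ≠ 0 := by rintro rfl; exact h1 (by simpa using hx)
    obtain ⟨k, rfl⟩ := Nat.exists_eq_succ_of_ne_zero hk
    rw [pow_succ, Nat.mul_div_cancel _ (by norm_num)]
    positivity
  parts_sum := by
    have hev : ∀ x ∈ π.parts, 2 * (x / 2) = x := by
      intro x hx
      obtain ⟨k, rfl⟩ := hbin x hx
      have hk : k ≠ 0 := by rintro rfl; exact h1 (by simpa using hx)
      have : 2 ∣ 2 ^ k := dvd_pow_self 2 hk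
      omega
    have h2 : (π.parts.map (fun x => 2 * (x / 2))).sum = 2 * (π.parts.map (· / 2)).sum :=
      Multiset.sum_map_mul_left
    have h1' : π.parts.map (fun x => 2 * (x / 2)) = π.parts :=
      (Multiset.map_congr rfl hev).trans (Multiset.map_id' _)
    have h3 := π.parts_sum
    rw [h1'] at h2
    omega

/-- double all parts -/
def double {n m : ℕ} (hm : n = 2 * m) (σ : Nat.Partition m) : Nat.Partition n where
  parts := σ.parts.map (2 * ·)
  parts_pos := fun hi => by
    obtain ⟨x, hx, rfl⟩ := Multiset.mem_map.mp hi
    have := σ.parts_pos hx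
    omega
  parts_sum := by
    have : (σ.parts.map (fun x => 2 * x)).sum = 2 * σ.parts.sum := by
      simpa using Multiset.sum_map_mul_left (s := σ.parts) (a := 2) (f := fun x => x)
    rw [this, σ.parts_sum, hm]

noncomputable def Tn (w : ℕ → ZMod 2) (n : ℕ) : ZMod 2 :=
  ∑ π ∈ binaryPartitions n, w (π.parts.count 1)

lemma Tn_zero (w : ℕ → ZMod 2) : Tn w 0 = w 0 := by
  simp [Tn, binP_zero, P0]

lemma Tn_one (w : ℕ → ZMod 2) : Tn w 1 = w 1 := by
  simp [Tn, binP_one, P1]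

lemma Tn_succ (w : ℕ → ZMod 2) (n : ℕ) :
    Tn w (n + 1) = (∑ π ∈ binaryPartitions n, w (π.parts.count 1 + 1))
      + (if 2 ∣ (n + 1) then (Bbin ((n + 1) / 2) : ZMod 2) * w 0 else 0) := by
  classical
  rw [Tn, ← Finset.sum_filter_add_sum_filter_not (binaryPartitions (n+1))
    (fun π => 1 ∈ π.parts)]
  congr 1
  · -- partitions containing a 1 ↔ partitions of n
    refine Finset.sum_bij'
      (i := fun π hπ => eraseOne π (Finset.mem_filter.mp hπ).2)
      (j := fun σ _ => addOne σ) ?hi ?hj ?li ?ri ?h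
    case hi =>
      intro π hπ
      rw [mem_binP]
      intro i hi
      exact mem_binP.mp (Finset.mem_filter.mp hπ).1 i (Multiset.mem_of_mem_erase hi)
    case hj =>
      intro σ hσ
      rw [Finset.mem_filter]
      refine ⟨mem_binP.mpr ?_, Multiset.mem_cons_self 1 _⟩
      intro i hi
      rcases Multiset.mem_cons.mp hi with h | h
      · exact ⟨0, by simp [h]⟩
      · exact mem_binP.mp hσ i h
    case li =>
      intro π hπ
      apply Nat.Partition.ext
      exact Multiset.cons_erase (Finset.mem_filter.mp hπ).2
    case ri =>
      intro σ hσ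
      apply Nat.Partition.ext
      exact Multiset.erase_cons_head 1 σ.parts
    case h =>
      intro π hπ
      have h1 : 1 ∈ π.parts := (Finset.mem_filter.mp hπ).2
      have hcnt : π.parts.count 1 = (π.parts.erase 1).count 1 + 1 := by
        have := Multiset.count_erase_self 1 π.parts
        have hge : 1 ≤ π.parts.count 1 := Multiset.one_le_count_iff_mem.mpr h1
        omega
      show w (π.parts.count 1) = w ((π.parts.erase 1).count 1 + 1)
      rw [hcnt]
  · -- partitions without a 1
    by_cases hpar : 2 ∣ (n + 1)
    · rw [if_pos hpar]
      obtain ⟨m, hm⟩ := hpar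
      have key : ∑ π ∈ (binaryPartitions (n+1)).filter (fun π => ¬ 1 ∈ π.parts),
          w (π.parts.count 1) = ∑ σ ∈ binaryPartitions m, w 0 := by
        refine Finset.sum_bij'
          (i := fun π hπ => halve hm π (mem_binP.mp (Finset.mem_filter.mp hπ).1)
            (Finset.mem_filter.mp hπ).2)
          (j := fun σ _ => double hm σ) ?hi2 ?hj2 ?li2 ?ri2 ?h2
        case hi2 =>
          intro π hπ
          rw [mem_binP]
          intro i hi
          obtain ⟨x, hx, rfl⟩ := Multiset.mem_map.mp hi
          obtain ⟨k, rfl⟩ := mem_binP.mp (Finset.mem_filter.mp hπ).1 x hx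
          have hk : k ≠ 0 := by
            rintro rfl; exact (Finset.mem_filter.mp hπ).2 (by simpa using hx)
          obtain ⟨k, rfl⟩ := Nat.exists_eq_succ_of_ne_zero hk
          exact ⟨k, by rw [pow_succ, Nat.mul_div_cancel _ (by norm_num)]⟩
        case hj2 =>
          intro σ hσ
          rw [Finset.mem_filter]
          constructor
          · rw [mem_binP]
            intro i hi
            obtain ⟨x, hx, rfl⟩ := Multiset.mem_map.mp hi
            obtain ⟨k, rfl⟩ := mem_binP.mp hσ x hx
            exact ⟨k + 1, by rw [pow_succ]; ring⟩
          · intro h1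
            obtain ⟨x, hx, hx2⟩ := Multiset.mem_map.mp h1
            have := σ.parts_pos hx
            omega
        case li2 =>
          intro π hπ
          apply Nat.Partition.ext
          show (π.parts.map (· / 2)).map (2 * ·) = π.parts
          rw [Multiset.map_map]
          refine (Multiset.map_congr rfl ?_).trans (Multiset.map_id' _)
          intro x hx
          obtain ⟨k, rfl⟩ := mem_binP.mp (Finset.mem_filter.mp hπ).1 x hx
          have hk : k ≠ 0 := by
            rintro rfl; exact (Finset.mem_filter.mp hπ).2 (by simpa using hx)
          have : 2 ∣ 2 ^ k := dvd_pow_self 2 hk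
          simp only [Function.comp_apply]
          omega
        case ri2 =>
          intro σ hσ
          apply Nat.Partition.ext
          show (σ.parts.map (2 * ·)).map (· / 2) = σ.parts
          rw [Multiset.map_map]
          refine (Multiset.map_congr rfl ?_).trans (Multiset.map_id' _)
          intro x hx
          simp only [Function.comp_apply]
          omega
        case h2 =>
          intro π hπ
          have : π.parts.count 1 = 0 :=
            Multiset.count_eq_zero.mpr (Finset.mem_filter.mp hπ).2
          show w (π.parts.count 1) = w 0
          rw [this]
      rw [key, Finset.sum_const, nsmul_eq_mul]
      have hm2 : (n + 1) / 2 = m := by omega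
      rw [hm2]
      rfl
    · rw [if_neg hpar]
      rw [Finset.sum_eq_zero]
      intro π hπ
      exfalso
      apply hpar
      rw [← π.parts_sum]
      apply Multiset.dvd_sum
      intro x hx
      obtain ⟨k, rfl⟩ := mem_binP.mp (Finset.mem_filter.mp hπ).1 x hx
      have hk : k ≠ 0 := by
        rintro rfl; exact (Finset.mem_filter.mp hπ).2 (by simpa using hx)
      exact dvd_pow_self 2 hk

noncomputable def Schain (j n : ℕ) : ZMod 2 := Tn (fun m => ((m.choose j : ℕ) : ZMod 2)) n

lemma Bbin_zero : Bbin 0 = 1 := by rw [Bbin, binP_zero]; rfl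
lemma Bbin_one : Bbin 1 = 1 := by rw [Bbin, binP_one]; rfl

lemma S0_eq (n : ℕ) : Schain 0 n = (Bbin n : ZMod 2) := by
  rw [Schain, Tn]
  simp [Bbin]

lemma S0_succ (n : ℕ) : Schain 0 (n + 1)
    = Schain 0 n + (if 2 ∣ (n + 1) then (Bbin ((n + 1) / 2) : ZMod 2) else 0) := by
  rw [Schain, Tn_succ, Schain, Tn]
  simp

lemma S_succ (j n : ℕ) :
    Schain (j + 1) (n + 1) = Schain (j + 1) n + Schain j n := by
  rw [Schain, Tn_succ, Schain, Tn, Schain, Tn]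
  have h0 : ((Nat.choose 0 (j + 1) : ℕ) : ZMod 2) = 0 := by simp
  rw [h0, mul_zero, ite_self, add_zero, ← Finset.sum_add_distrib]
  exact Finset.sum_congr rfl fun π _ => by rw [Nat.choose_succ_succ]; push_cast; ring

lemma Bbin_even : ∀ n : ℕ, 2 ≤ n → (Bbin n : ZMod 2) = 0 := by
  intro n
  induction n using Nat.strong_induction_on with
  | _ n ih =>
    intro hn
    obtain ⟨m, rfl⟩ : ∃ m, n = m + 1 := ⟨n - 1, by omega⟩
    have h := S0_succ m
    rw [S0_eq, S0_eq] at h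
    rcases Nat.lt_or_ge m 2 with hm | hm
    · have hm1 : m = 1 := by omega
      subst hm1
      rw [h]
      norm_num [Bbin_one]
      decide
    · rw [h, ih m (by omega) hm]
      by_cases hd : 2 ∣ (m + 1)
      · rw [if_pos hd, ih ((m + 1) / 2) (by omega) (by omega)]
        ring
      · rw [if_neg hd]; ring

lemma S1_eq (n : ℕ) (hn : 2 ≤ n) : Schain 1 n = 0 := by
  induction n, hn using Nat.le_induction with
  | base =>
    have := S_succ 0 1
    rw [this, S0_eq, Bbin_one]
    have h1 : Schain 1 1 = ((Nat.choose 1 1 : ℕ) : ZMod 2) := Tn_one _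
    rw [h1]
    decide
  | succ n hn ih =>
    rw [S_succ, ih, S0_eq, Bbin_even n hn]
    ring

lemma S2_eq (n : ℕ) (hn : 2 ≤ n) : Schain 2 n = 1 := by
  induction n, hn using Nat.le_induction with
  | base =>
    have := S_succ 1 1
    rw [this]
    have h1 : Schain 2 1 = ((Nat.choose 1 2 : ℕ) : ZMod 2) := Tn_one _
    have h2 : Schain 1 1 = ((Nat.choose 1 1 : ℕ) : ZMod 2) := Tn_one _
    rw [h1, h2]
    decide
  | succ n hn ih =>
    rw [S_succ, ih, S1_eq n hn]
    ring

lemma S3_eq (n : ℕ) (hn : 2 ≤ n) : Schain 3 n = (n : ZMod 2) := by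
  induction n, hn using Nat.le_induction with
  | base =>
    have := S_succ 2 1
    rw [this]
    have h1 : Schain 3 1 = ((Nat.choose 1 3 : ℕ) : ZMod 2) := Tn_one _
    have h2 : Schain 2 1 = ((Nat.choose 1 2 : ℕ) : ZMod 2) := Tn_one _
    rw [h1, h2]
    decide
  | succ n hn ih =>
    rw [S_succ, ih, S2_eq n hn]
    push_cast
    ring

end Aux

theorem e3B_parity (n : ℕ) (hn : 2 ≤ n) : ejB 3 n ≡ n [MOD 2] := by
  have hcast : ((ejB 3 n : ℕ) : ZMod 2) = Schain 3 n := by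
    rw [ejB, Nat.cast_sum, Schain, Tn]
    exact Finset.sum_congr rfl fun π hπ => esymm_mod_two _ (mem_binP.mp hπ) 3
  exact (ZMod.natCast_eq_natCast_iff _ _ _).1 (hcast.trans (S3_eq n hn))
end
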